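/- arXiv:2110.01377 — 15 statements merged into one kernel-verified Lean document; each statement's English description precedes it below -/
import Mathlib

section
/- Let 𝓔 be a coarse structure on a set X and let ≤ be a linear order on X that is compatible with 𝓔. Then for every E ∈ 𝓔 there exists E′ ∈ 𝓔 such that E ⊆ E′ and the ball E′[x] is convex for every x ∈ X; consequently 𝓔 has a base consisting of entourages all of whose balls are convex (i.e., (X, 𝓔, ≤) is locally convex). -/
open Set

variable {X : Type*}

/-- The ball `E[x] = {y | (x,y) ∈ E}`. -/
def Ball (E : Set (X × X)) (x : X) : Set X := {y | (x, y) ∈ E}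

/-- `E[A] = ⋃ a ∈ A, E[a]`. -/
def BallSet (E : Set (X × X)) (A : Set X) : Set X := ⋃ a ∈ A, Ball E a

/-- Composition of entourages: `E ∘ F = {(x,y) | ∃ z, (x,z) ∈ E ∧ (z,y) ∈ F}`. -/
def Comp (E F : Set (X × X)) : Set (X × X) := {p | ∃ z, (p.1, z) ∈ E ∧ (z, p.2) ∈ F}

/-- Inverse entourage `E⁻¹`. -/
def EInv (E : Set (X × X)) : Set (X × X) := {p | (p.2, p.1) ∈ E}

/-- `𝓔` is a coarse structure on `X`. -/
def IsCoarse (𝓔 : Set (Set (X × X))) : Prop :=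
  (∀ E ∈ 𝓔, ∀ x : X, (x, x) ∈ E) ∧
  (∀ E ∈ 𝓔, ∀ F ∈ 𝓔, Comp E F ∈ 𝓔) ∧
  (∀ E ∈ 𝓔, EInv E ∈ 𝓔) ∧
  (∀ E ∈ 𝓔, ∀ E' : Set (X × X), (∀ x : X, (x, x) ∈ E') → E' ⊆ E → E' ∈ 𝓔)

/-- A subset of a linearly ordered set is convex. -/
def IsConvexSet [LinearOrder X] (Y : Set X) : Prop :=
  ∀ a ∈ Y, ∀ b ∈ Y, ∀ c : X, a ≤ c → c ≤ b → c ∈ Y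

/-- The linear order `≤` is compatible with the coarse structure `𝓔`. -/
def Compatible [LinearOrder X] (𝓔 : Set (Set (X × X))) : Prop :=
  ∀ E ∈ 𝓔, ∃ F ∈ 𝓔, ∀ x y : X, x < y → y ∉ Ball F x → ∀ x' ∈ Ball E x, x' < y

/-- The coarse space `(X, 𝓔)` is connected. -/
def CoarseConnected (𝓔 : Set (Set (X × X))) : Prop :=
  ∀ x y : X, ∃ E ∈ 𝓔, (x, y) ∈ E

/-- `B` is a bounded subset of the coarse space `(X, 𝓔)`. -/
def IsBoundedIn (𝓔 : Set (Set (X × X))) (B : Set X) : Prop :=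
  B = ∅ ∨ ∃ E ∈ 𝓔, ∃ x : X, B ⊆ Ball E x

/-- `a` is a right `E`-end of `A`. -/
def RightEnd [LinearOrder X] (E : Set (X × X)) (A : Set X) (a : X) : Prop :=
  a ∈ A ∧ ∀ x ∈ A, x ∉ Ball E a → x < a

/-- The interval bornology of a linear order. -/
def IB (X : Type*) [LinearOrder X] : Set (Set X) :=
  {B | B = ∅ ∨ ∃ a b : X, B ⊆ Icc a b}

/-- The family of bounded convex subsets of a linearly ordered set. -/
def ConvB (X : Type*) [LinearOrder X] : Set (Set X) :=
  {C | IsConvexSet C ∧ ∃ a b : X, C ⊆ Icc a b}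

/-- The family `Φ` of Example 2. -/
def Phi (X : Type*) [LinearOrder X] : Set (X → Set X) :=
  {φ | (∀ x : X, φ x ∈ ConvB X) ∧ (∀ x : X, x ∈ φ x) ∧
    ∀ a b : X, (⋃ x ∈ Icc a b, φ x) ∈ IB X ∧ {x : X | (φ x ∩ Icc a b).Nonempty} ∈ IB X}

/-- The entourage `E_φ` associated with `φ : X → Set X`. -/
def EPhi (φ : X → Set X) : Set (X × X) := {p | p.2 ∈ φ p.1}

/-- `compPow E n = Eⁿ` for `n ≥ 1` (the value at `0` is junk): `E¹ = E`, `E^{n+1} = E ∘ Eⁿ`. -/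
def compPow (E : Set (X × X)) : ℕ → Set (X × X)
  | 0 => E
  | 1 => E
  | (n + 2) => Comp E (compPow E (n + 1))

/-- Theorem 1, (i) ⇒ (ii): a compatible linear order makes every entourage enlargeable to one
with convex balls; consequently `𝓔` has a base with convex balls (local convexity). -/
theorem linearly_ordered_is_locally_convex [LinearOrder X]
    (𝓔 : Set (Set (X × X))) (hc : IsCoarse 𝓔) (hcomp : Compatible 𝓔) :
    (∀ E ∈ 𝓔, ∃ E' ∈ 𝓔, E ⊆ E' ∧ ∀ x : X, IsConvexSet (Ball E' x)) ∧
    ∃ 𝓔' ⊆ 𝓔, (∀ E ∈ 𝓔, ∃ E'' ∈ 𝓔', E ⊆ E'') ∧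
      ∀ E' ∈ 𝓔', ∀ x : X, IsConvexSet (Ball E' x) := by
  obtain ⟨hdiag, hcompo, hinv, hsub⟩ := hc
  have main : ∀ E ∈ 𝓔, ∃ E' ∈ 𝓔, E ⊆ E' ∧ ∀ x : X, IsConvexSet (Ball E' x) := by
    intro E hE
    obtain ⟨F, hF, hFprop⟩ := hcomp E hE
    obtain ⟨F₁, hF₁, hF₁prop⟩ := hcomp (EInv E) (hinv E hE)
    set E' : Set (X × X) :=
      {p | ∃ a b, a ∈ Ball E p.1 ∧ b ∈ Ball E p.1 ∧ a ≤ p.2 ∧ p.2 ≤ b} with hE'def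
    have hEF₁ : Comp E F₁ ∈ 𝓔 := hcompo E hE F₁ hF₁
    have hU1 : Comp F (Comp E F₁) ∈ 𝓔 := hcompo F hF _ hEF₁
    have hBig : Comp E (Comp F (Comp E F₁)) ∈ 𝓔 := hcompo E hE _ hU1
    -- embeddings of the three pieces into the big composition
    have embE : E ⊆ Comp E (Comp F (Comp E F₁)) := by
      rintro ⟨x, y⟩ hxy
      exact ⟨y, hxy, y, hdiag F hF y, y, hdiag E hE y, hdiag F₁ hF₁ y⟩
    have embF : F ⊆ Comp E (Comp F (Comp E F₁)) := by
      rintro ⟨x, y⟩ hxy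
      exact ⟨x, hdiag E hE x, y, hxy, y, hdiag E hE y, hdiag F₁ hF₁ y⟩
    have embC : Comp E F₁ ⊆ Comp E (Comp F (Comp E F₁)) := by
      rintro ⟨x, y⟩ hxy
      exact ⟨x, hdiag E hE x, x, hdiag F hF x, hxy⟩
    -- E' is contained in the big composition
    have hsubBig : E' ⊆ Comp E (Comp F (Comp E F₁)) := by
      rintro ⟨x, y⟩ ⟨a, b, ha, hb, hay, hyb⟩
      rcases lt_trichotomy x y with hxy | hxy | hxy
      · by_cases hyF : y ∈ Ball F x
        · exact embF hyF
        · exact absurd (hFprop x y hxy hyF b hb) (not_lt.2 hyb)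
      · subst hxy
        exact embE (hdiag E hE x)
      · rcases eq_or_lt_of_le hay with hay' | hay'
        · subst hay'
          exact embE ha
        · by_cases hyF₁ : y ∈ Ball F₁ a
          · exact embC ⟨a, ha, hyF₁⟩
          · have hx : x ∈ Ball (EInv E) a := ha
            exact absurd (hF₁prop a y hay' hyF₁ x hx) (not_lt.2 hxy.le)
    have hE'diag : ∀ x : X, (x, x) ∈ E' := fun x =>
      ⟨x, x, hdiag E hE x, hdiag E hE x, le_rfl, le_rfl⟩
    refine ⟨E', hsub _ hBig E' hE'diag hsubBig, ?_, ?_⟩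
    · intro p hp
      exact ⟨p.2, p.2, hp, hp, le_rfl, le_rfl⟩
    · intro x u hu v hv c hac hcb
      obtain ⟨a, _, ha, _, hau, _⟩ := hu
      obtain ⟨_, b, _, hb, _, hvb⟩ := hv
      exact ⟨a, b, ha, hb, hau.trans hac, hcb.trans hvb⟩
  refine ⟨main, {E'' ∈ 𝓔 | ∀ x : X, IsConvexSet (Ball E'' x)}, fun _ h => h.1, ?_, fun _ h => h.2⟩
  intro E hE
  obtain ⟨E', hE', hEE', hconv⟩ := main E hE
  exact ⟨E', ⟨hE', hconv⟩, hEE'⟩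
end

section
/- Let 𝓔 be a coarse structure on a set X and let ≤ be a linear order on X. If 𝓔 has a base 𝓔′ such that the ball E′[x] is convex for all x ∈ X and all E′ ∈ 𝓔′, then ≤ is compatible with 𝓔. -/
open Set

variable {X : Type*}

/-- Theorem 1, (ii) ⇒ (i): a base of entourages with convex balls forces compatibility. -/
theorem convex_base_implies_compatible [LinearOrder X]
    (𝓔 𝓔' : Set (Set (X × X))) (hc : IsCoarse 𝓔)
    (hsub : 𝓔' ⊆ 𝓔) (hbase : ∀ E ∈ 𝓔, ∃ E'' ∈ 𝓔', E ⊆ E'')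
    (hconv : ∀ E'' ∈ 𝓔', ∀ x : X, IsConvexSet (Ball E'' x)) :
    Compatible 𝓔 := by
  intro E hE
  obtain ⟨E'', hE'', hsubE⟩ := hbase E hE
  refine ⟨E'', hsub hE'', fun x y hxy hyF x' hx' => ?_⟩
  by_contra h
  push_neg at h
  exact hyF (hconv E'' hE'' x x (hc.1 E'' (hsub hE'') x) x' (hsubE hx') y (le_of_lt hxy) h)
end

section
/- Let (X, 𝓔, ≤) be a linearly ordered coarse space (connected, with ≤ compatible with 𝓔). Then the asymptotic dimension of (X, 𝓔) is at most 1; explicitly: for every E ∈ 𝓔 there exist F ∈ 𝓔 and two families 𝓜₀, 𝓜₁ of subsets of X such that X = ⋃(𝓜₀ ∪ 𝓜₁); every A ∈ 𝓜₀ ∪ 𝓜₁ satisfies A ⊆ F[x_A] for some x_A ∈ X; and for each i ∈ {0,1} and all distinct A, B ∈ 𝓜ᵢ one has E[A] ∩ B = ∅. -/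
open Set

variable {X : Type*}

section AuxChains

variable {Y : Type*}

lemma comp_mem' {A B : Set (Y × Y)} {x y z : Y} (h1 : (x, z) ∈ A) (h2 : (z, y) ∈ B) :
    (x, y) ∈ Comp A B := ⟨z, h1, h2⟩

lemma coarse_union {𝓔 : Set (Set (Y × Y))} (hc : IsCoarse 𝓔) {E F : Set (Y × Y)}
    (hE : E ∈ 𝓔) (hF : F ∈ 𝓔) : E ∪ F ∈ 𝓔 := by
  refine hc.2.2.2 (Comp E F) (hc.2.1 E hE F hF) (E ∪ F) (fun x => Or.inl (hc.1 E hE x)) ?_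
  rintro ⟨x, y⟩ (h | h)
  · exact ⟨y, h, hc.1 F hF y⟩
  · exact ⟨x, hc.1 E hE x, h⟩

/-- Chains with steps in `T`. -/
def RelChain (T : Set (Y × Y)) (x y : Y) : Prop :=
  ∃ (k : ℕ) (w : ℕ → Y), w 0 = x ∧ w k = y ∧ ∀ i, i < k → (w i, w (i + 1)) ∈ T

lemma relChain_refl (T : Set (Y × Y)) (x : Y) : RelChain T x x :=
  ⟨0, fun _ => x, rfl, rfl, fun i hi => absurd hi (Nat.not_lt_zero i)⟩

lemma relChain_single {T : Set (Y × Y)} {x y : Y} (h : (x, y) ∈ T) : RelChain T x y := by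
  refine ⟨1, fun i => if i = 0 then x else y, by simp, by simp, ?_⟩
  intro i hi
  have : i = 0 := by omega
  subst this
  simpa using h

lemma relChain_snoc {T : Set (Y × Y)} {x y z : Y} (h : RelChain T x y) (hz : (y, z) ∈ T) :
    RelChain T x z := by
  obtain ⟨k, w, hw0, hwk, hws⟩ := h
  refine ⟨k + 1, fun i => if i = k + 1 then z else w i, ?_, by simp, ?_⟩
  · simp only [if_neg (by omega : ¬ (0 : ℕ) = k + 1)]
    exact hw0
  intro i hi
  by_cases hik : i = k
  · subst hik
    simp only [if_pos rfl, if_neg (by omega : ¬ i = i + 1)]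
    rwa [hwk]
  · have h1 : ¬ i = k + 1 := by omega
    have h2 : ¬ i + 1 = k + 1 := by omega
    simp only [if_neg h1, if_neg h2]
    exact hws i (by omega)

lemma relChain_trans {T : Set (Y × Y)} {x y z : Y}
    (h1 : RelChain T x y) (h2 : RelChain T y z) : RelChain T x z := by
  obtain ⟨k, w, hw0, hwk, hws⟩ := h2
  subst hwk
  have key : ∀ m, m ≤ k → RelChain T x (w m) := by
    intro m
    induction m with
    | zero => intro _; rw [hw0]; exact h1
    | succ n IH => intro h; exact relChain_snoc (IH (by omega)) (hws n (by omega))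
  exact key k le_rfl

lemma relChain_point {T : Set (Y × Y)} {k : ℕ} {w : ℕ → Y}
    (hws : ∀ i, i < k → (w i, w (i + 1)) ∈ T) {j : ℕ} (hj : j ≤ k) :
    RelChain T (w 0) (w j) :=
  ⟨j, w, rfl, rfl, fun i hi => hws i (by omega)⟩

lemma relChain_symm {T : Set (Y × Y)} (hT : ∀ a b : Y, (a, b) ∈ T → (b, a) ∈ T)
    {x y : Y} (h : RelChain T x y) : RelChain T y x := by
  obtain ⟨k, w, hw0, hwk, hws⟩ := h
  subst hw0; subst hwk
  induction k with
  | zero => exact relChain_refl T _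
  | succ n IH =>
      have h1 : RelChain T (w (n + 1)) (w n) := relChain_single (hT _ _ (hws n (by omega)))
      have h2 : RelChain T (w n) (w 0) := IH (fun i hi => hws i (by omega))
      exact relChain_trans h1 h2

end AuxChains

section Hull

variable [LinearOrder X]

/-- Lemmas A & B: for a symmetric entourage `S` there is a symmetric `G ⊇ S` such that
whenever `(x,y) ∈ S` and `z` lies between `x` and `y`, both `(x,z)` and `(z,y)` are in `G`. -/
lemma hull_ent {𝓔 : Set (Set (X × X))} (hc : IsCoarse 𝓔) (hcomp : Compatible 𝓔)
    {S : Set (X × X)} (hS : S ∈ 𝓔) (hsym : ∀ x y : X, (x, y) ∈ S → (y, x) ∈ S) :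
    ∃ G ∈ 𝓔, S ⊆ G ∧ (∀ x y : X, (x, y) ∈ G → (y, x) ∈ G) ∧
      (∀ x y z : X, (x, y) ∈ S → x ≤ z → z ≤ y → (x, z) ∈ G ∧ (z, y) ∈ G) ∧
      (∀ x y z : X, (x, y) ∈ S → y ≤ z → z ≤ x → (x, z) ∈ G ∧ (z, y) ∈ G) := by
  obtain ⟨F₁', hF₁'mem, hF₁'⟩ := hcomp S hS
  set F₁ : Set (X × X) := F₁' ∪ S with hF₁def
  have hF₁mem : F₁ ∈ 𝓔 := coarse_union hc hF₁'mem hS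
  have prop₁ : ∀ x y : X, x < y → (x, y) ∉ F₁ → ∀ x' ∈ Ball S x, x' < y := by
    intro x y hxy hn
    exact hF₁' x y hxy (fun hmem => hn (Or.inl hmem))
  obtain ⟨F₂', hF₂'mem, hF₂'⟩ := hcomp F₁ hF₁mem
  set F₂ : Set (X × X) := F₂' ∪ F₁ with hF₂def
  have hF₂mem : F₂ ∈ 𝓔 := coarse_union hc hF₂'mem hF₁mem
  have prop₂ : ∀ x y : X, x < y → (x, y) ∉ F₂ → ∀ x' ∈ Ball F₁ x, x' < y := by
    intro x y hxy hn
    exact hF₂' x y hxy (fun hmem => hn (Or.inl hmem))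
  set C : Set (X × X) := Comp (EInv F₂) F₂ with hCdef
  have hCmem : C ∈ 𝓔 := hc.2.1 _ (hc.2.2.1 _ hF₂mem) _ hF₂mem
  set G : Set (X × X) := C ∪ (F₂ ∪ EInv F₂) with hGdef
  have hGmem : G ∈ 𝓔 := coarse_union hc hCmem (coarse_union hc hF₂mem (hc.2.2.1 _ hF₂mem))
  have hSF₁ : S ⊆ F₁ := fun p hp => Or.inr hp
  have hF₁F₂ : F₁ ⊆ F₂ := fun p hp => Or.inr hp
  have hSG : S ⊆ G := fun p hp => Or.inr (Or.inl (hF₁F₂ (hSF₁ hp)))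
  have hGsym : ∀ x y : X, (x, y) ∈ G → (y, x) ∈ G := by
    rintro x y (⟨z, h1, h2⟩ | (h | h))
    · exact Or.inl ⟨z, h2, h1⟩
    · exact Or.inr (Or.inr h)
    · exact Or.inr (Or.inl h)
  -- control lemma A1
  have A1 : ∀ x y : X, x < y → (x, y) ∉ G → ∀ x' ∈ Ball S x, x' < y := by
    intro x y hxy hn
    exact prop₁ x y hxy (fun hm => hn (Or.inr (Or.inl (hF₁F₂ hm))))
  -- control lemma A2
  have A2 : ∀ x y : X, x < y → (x, y) ∉ G → ∀ y' ∈ Ball S y, x < y' := by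
    intro x y hxy hn y' hy'
    by_contra hle
    push_neg at hle
    rcases eq_or_lt_of_le hle with rfl | hlt
    · exact hn (hSG (hsym _ _ hy'))
    · -- y' < x < y, (y, y') ∈ S
      have hy'y : (y', y) ∈ F₁ := hSF₁ (hsym _ _ hy')
      have hxF₂ : (y', x) ∈ F₂ := by
        by_contra hnx
        have := prop₂ y' x hlt hnx y hy'y
        exact absurd hxy (not_lt.2 this.le)
      exact hn (Or.inl ⟨y', hxF₂, hF₁F₂ hy'y⟩)
  have hdiagG : ∀ x : X, (x, x) ∈ G := hc.1 G hGmem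
  have hull1 : ∀ x y z : X, (x, y) ∈ S → x ≤ z → z ≤ y → (x, z) ∈ G ∧ (z, y) ∈ G := by
    intro x y z hxy hxz hzy
    constructor
    · rcases eq_or_lt_of_le hxz with rfl | hlt
      · exact hdiagG x
      · by_contra hn
        exact absurd (A1 x z hlt hn y hxy) (not_lt.2 hzy)
    · rcases eq_or_lt_of_le hzy with rfl | hlt
      · exact hdiagG z
      · by_contra hn
        exact absurd (A2 z y hlt hn x (hsym _ _ hxy)) (not_lt.2 hxz)
  refine ⟨G, hGmem, hSG, hGsym, hull1, ?_⟩
  intro x y z hxy hyz hzx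
  have := hull1 y x z (hsym _ _ hxy) hyz hzx
  exact ⟨hGsym _ _ this.2, hGsym _ _ this.1⟩

end Hull

section Straighten

/-- Straightening a chain into a strictly increasing chain. -/
lemma ext_chain {Y : Type*} [LinearOrder Y] (T₂ T₃ : Set (Y × Y))
    (dT₃ : ∀ x : Y, (x, x) ∈ T₃) (sT₃ : ∀ x y : Y, (x, y) ∈ T₃ → (y, x) ∈ T₃)
    (hull₃ : ∀ x y z : Y, (x, y) ∈ T₂ → x ≤ z → z ≤ y → (x, z) ∈ T₃ ∧ (z, y) ∈ T₃) :
    ∀ k : ℕ, ∀ w : ℕ → Y, (∀ i, i < k → (w i, w (i + 1)) ∈ T₂) → ∀ x y : Y,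
      w 0 = x → w k = y → x ≤ y →
      ∃ (K : ℕ) (W : ℕ → Y), W 0 = x ∧ W K = y ∧
        (∀ i, i < K → (W i, W (i + 1)) ∈ Comp T₃ T₃ ∧ W i < W (i + 1)) ∧
        (∀ i, i ≤ K → ∃ j, j ≤ k ∧ W i = w j) := by
  intro k
  induction k using Nat.strong_induction_on with
  | _ k IH =>
    intro w hw x y hw0 hwk hxy
    classical
    rcases eq_or_lt_of_le hxy with rfl | hlt
    · exact ⟨0, fun _ => x, rfl, rfl, fun i hi => absurd hi (Nat.not_lt_zero i),
        fun i _ => ⟨0, Nat.zero_le k, hw0.symm⟩⟩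
    · have hP0 : w 0 ≤ x := le_of_eq hw0
      set i₀ := Nat.findGreatest (fun i => w i ≤ x) k with hi₀def
      have hi₀P : w i₀ ≤ x := Nat.findGreatest_spec (P := fun i => w i ≤ x) (Nat.zero_le k) hP0
      have hi₀le : i₀ ≤ k := Nat.findGreatest_le (P := fun i => w i ≤ x) k
      have hi₀lt : i₀ < k := by
        rcases eq_or_lt_of_le hi₀le with heq | h
        · exfalso; rw [heq, hwk] at hi₀P; exact absurd hi₀P (not_le.2 hlt)
        · exact h
      have hnext : ¬ (w (i₀ + 1) ≤ x) :=
        Nat.findGreatest_is_greatest (P := fun i => w i ≤ x) (Nat.lt_succ_self i₀) (by omega)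
      have hxu : x < w (i₀ + 1) := not_le.1 hnext
      have hstep := hw i₀ hi₀lt
      have h1 : (w i₀, x) ∈ T₃ ∧ (x, w (i₀ + 1)) ∈ T₃ := hull₃ _ _ _ hstep hi₀P hxu.le
      rcases le_or_gt y (w (i₀ + 1)) with hyu | huy
      · have h2 : (w i₀, y) ∈ T₃ := (hull₃ _ _ _ hstep (le_trans hi₀P hxy) hyu).1
        refine ⟨1, fun i => if i = 0 then x else y, by simp, by simp, ?_, ?_⟩
        · intro i hi
          have : i = 0 := by omega
          subst this
          simp only [if_pos rfl, if_neg (by omega : ¬ (0 + 1 : ℕ) = 0)]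
          exact ⟨⟨w i₀, sT₃ _ _ h1.1, h2⟩, hlt⟩
        · intro i hi
          rcases Nat.le_one_iff_eq_zero_or_eq_one.1 hi with rfl | rfl
          · exact ⟨0, Nat.zero_le k, by simpa using hw0.symm⟩
          · exact ⟨k, le_rfl, by simpa using hwk.symm⟩
      · -- recurse on the suffix chain
        have hk1 : k - (i₀ + 1) < k := by omega
        have hsuffix : ∀ m, m < k - (i₀ + 1) →
            ((fun m => w (m + (i₀ + 1))) m, (fun m => w (m + (i₀ + 1))) (m + 1)) ∈ T₂ := by
          intro m hm
          have h := hw (m + (i₀ + 1)) (by omega)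
          have e : m + 1 + (i₀ + 1) = m + (i₀ + 1) + 1 := by omega
          simpa [e] using h
        have hend : (fun m => w (m + (i₀ + 1))) (k - (i₀ + 1)) = y := by
          have e : k - (i₀ + 1) + (i₀ + 1) = k := by omega
          simp only [e, hwk]
        obtain ⟨K', W', hW'0, hW'K, hW's, hW'pts⟩ :=
          IH (k - (i₀ + 1)) hk1 (fun m => w (m + (i₀ + 1))) hsuffix (w (i₀ + 1)) y
            (by simp) hend huy.le
        refine ⟨K' + 1, fun i => if i = 0 then x else W' (i - 1), by simp, ?_, ?_, ?_⟩
        · simp only [if_neg (by omega : ¬ K' + 1 = 0), Nat.add_sub_cancel]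
          exact hW'K
        · intro i hi
          rcases Nat.eq_zero_or_pos i with rfl | hip
          · simp only [if_pos rfl, if_neg (by omega : ¬ (0 + 1 : ℕ) = 0), Nat.add_sub_cancel]
            rw [hW'0]
            exact ⟨⟨w (i₀ + 1), h1.2, dT₃ _⟩, hxu⟩
          · have e1 : ¬ i = 0 := by omega
            have e2 : ¬ i + 1 = 0 := by omega
            simp only [if_neg e1, if_neg e2]
            have h := hW's (i - 1) (by omega)
            have e3 : i - 1 + 1 = i := by omega
            rw [e3] at h
            have e4 : i + 1 - 1 = i := by omega
            rw [e4]
            exact h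
        · intro i hi
          rcases Nat.eq_zero_or_pos i with rfl | hip
          · exact ⟨0, Nat.zero_le k, by simpa using hw0.symm⟩
          · obtain ⟨j, hj, hji⟩ := hW'pts (i - 1) (by omega)
            refine ⟨j + (i₀ + 1), by omega, ?_⟩
            simp only [if_neg (by omega : ¬ i = 0)]
            exact hji

end Straighten

section Core

/-- The core one-sided decomposition lemma. -/
lemma chopCore {Y : Type*} [LinearOrder Y]
    (T₄ T₇ F : Set (Y × Y)) (P : Y → Prop) (g₀ : Y) (hPg : P g₀)
    (dT₄ : ∀ x : Y, (x, x) ∈ T₄) (dT₇ : ∀ x : Y, (x, x) ∈ T₇)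
    (sT₇ : ∀ x y : Y, (x, y) ∈ T₇ → (y, x) ∈ T₇)
    (hull₇ : ∀ x y z : Y, (x, y) ∈ T₄ → x ≤ z → z ≤ y → (x, z) ∈ T₇)
    (hullF : ∀ x y z : Y, (x, y) ∈ Comp (Comp T₄ (Comp T₇ T₇)) T₄ → x ≤ z → z ≤ y → (x, z) ∈ F)
    (CH : ∀ x y : Y, P x → P y → x ≤ y → ∃ (k : ℕ) (w : ℕ → Y), w 0 = x ∧ w k = y ∧
        (∀ i, i < k → (w i, w (i + 1)) ∈ T₄ ∧ w i < w (i + 1)) ∧ (∀ i, i ≤ k → P (w i))) :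
    ∃ cells : ℕ → Set Y,
      (∀ n, ∀ x ∈ cells n, P x ∧ g₀ ≤ x) ∧
      (∀ x : Y, P x → g₀ ≤ x → ∃ n, x ∈ cells n) ∧
      (∀ n, ∃ z : Y, ∀ x ∈ cells n, (z, x) ∈ F) ∧
      (∀ m n, m < n → ∀ x ∈ cells m, ∀ y ∈ cells n, x < y) ∧
      (∀ n, (cells (n + 1)).Nonempty → ∃ p q : Y, p ∈ cells n ∧ q ∈ cells n ∧
        g₀ < p ∧ g₀ < q ∧ (p, q) ∉ Comp T₇ T₇) ∧
      (∀ m n, m ≤ n → (cells n).Nonempty → (cells m).Nonempty) := by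
  classical
  set V : Set (Y × Y) := Comp T₇ T₇ with hVdef
  set W1 : Set (Y × Y) := Comp T₄ V with hW1def
  have dV : ∀ a : Y, (a, a) ∈ V := fun a => ⟨a, dT₇ a, dT₇ a⟩
  have dW1 : ∀ a : Y, (a, a) ∈ W1 := fun a => ⟨a, dT₄ a, dV a⟩
  set Pred : Set Y → Y → Y → Prop := fun R a c =>
    c ∈ R ∧ (a, c) ∈ Comp W1 T₄ ∧
      ∃ p q : Y, p ∈ R ∧ q ∈ R ∧ p ≤ c ∧ q ≤ c ∧ a < p ∧ a < q ∧ (p, q) ∉ V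
    with hPreddef
  set step : Set Y × Y → Set Y × Y := fun s =>
    if h : ∃ c, Pred s.1 s.2 c then (s.1 ∩ Ioi h.choose, h.choose) else (∅, s.2)
    with hstepdef
  set St : ℕ → Set Y × Y := fun n => Nat.rec ({x : Y | P x ∧ g₀ ≤ x}, g₀) (fun _ s => step s) n
    with hStdef
  have hSt0 : St 0 = ({x : Y | P x ∧ g₀ ≤ x}, g₀) := rfl
  have hStS : ∀ n, St (n + 1) = step (St n) := fun n => rfl
  have hpos0 : ∀ n (h : ∃ c, Pred (St n).1 (St n).2 c),
      St (n + 1) = ((St n).1 ∩ Ioi h.choose, h.choose) := by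
    intro n h
    rw [hStS n]
    show (if h' : ∃ c, Pred (St n).1 (St n).2 c
      then ((St n).1 ∩ Ioi h'.choose, h'.choose) else (∅, (St n).2)) = _
    rw [dif_pos h]
  have hneg0 : ∀ n, ¬ (∃ c, Pred (St n).1 (St n).2 c) →
      St (n + 1) = (∅, (St n).2) := by
    intro n h
    rw [hStS n]
    show (if h' : ∃ c, Pred (St n).1 (St n).2 c
      then ((St n).1 ∩ Ioi h'.choose, h'.choose) else (∅, (St n).2)) = _
    rw [dif_neg h]
  have hpos : ∀ n (h : ∃ c, Pred (St n).1 (St n).2 c),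
      (St (n + 1)).1 = (St n).1 ∩ Ioi h.choose ∧ (St (n + 1)).2 = h.choose :=
    fun n h => ⟨by rw [hpos0 n h], by rw [hpos0 n h]⟩
  have hneg : ∀ n, ¬ (∃ c, Pred (St n).1 (St n).2 c) →
      (St (n + 1)).1 = ∅ ∧ (St (n + 1)).2 = (St n).2 :=
    fun n h => ⟨by rw [hneg0 n h], by rw [hneg0 n h]⟩
  -- regions decrease
  have hRsub : ∀ n, (St (n + 1)).1 ⊆ (St n).1 := by
    intro n
    by_cases h : ∃ c, Pred (St n).1 (St n).2 c
    · rw [(hpos n h).1]; exact inter_subset_left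
    · rw [(hneg n h).1]; exact empty_subset _
  have hRsub' : ∀ m n, m ≤ n → (St n).1 ⊆ (St m).1 := by
    intro m n hmn
    induction n with
    | zero => have : m = 0 := by omega
              subst this; exact le_rfl
    | succ n IH =>
        rcases Nat.lt_or_ge m (n + 1) with h | h
        · exact subset_trans (hRsub n) (IH (by omega))
        · have : m = n + 1 := by omega
          subst this; exact le_rfl
  -- invariant
  have hInv : ∀ n, (St n).1 = ∅ ∨ (P (St n).2 ∧ g₀ ≤ (St n).2 ∧
      (∀ x ∈ (St n).1, P x ∧ g₀ ≤ x ∧ (St n).2 ≤ x) ∧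
      (∀ x : Y, P x → (St n).2 < x → x ∈ (St n).1)) := by
    intro n
    induction n with
    | zero =>
        right
        refine ⟨hPg, le_rfl, ?_, ?_⟩
        · intro x hx; exact ⟨hx.1, hx.2, hx.2⟩
        · intro x hx hgx; exact ⟨hx, le_of_lt hgx⟩
    | succ n IH =>
        by_cases h : ∃ c, Pred (St n).1 (St n).2 c
        · obtain ⟨h1, h2⟩ := hpos n h
          have hcPred := h.choose_spec
          rcases IH with hemp | ⟨hPa, hga, hsub, hsup⟩
          · left
            rw [h1]
            apply eq_empty_of_subset_empty
            intro z hz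
            have := hz.1
            rw [hemp] at this
            exact absurd this (notMem_empty z)
          · right
            rw [h1, h2]
            have hcR := hcPred.1
            have hc1 := hsub _ hcR
            refine ⟨hc1.1, hc1.2.1, ?_, ?_⟩
            · rintro x ⟨hx1, hx2⟩
              have := hsub x hx1
              exact ⟨this.1, this.2.1, le_of_lt hx2⟩
            · intro x hPx hcx
              exact ⟨hsup x hPx (lt_of_le_of_lt hc1.2.2 hcx), hcx⟩
        · left; exact (hneg n h).1
  -- the stage lemma: if some point of the region is W1-far from the anchor, Pred has a witness
  have hstage : ∀ n, ∀ r ∈ (St n).1, ((St n).2, r) ∉ W1 →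
      ∃ c, Pred (St n).1 (St n).2 c := by
    intro n r hr hnr
    rcases hInv n with hemp | ⟨hPa, hga, hsub, hsup⟩
    · exact absurd hr (by rw [hemp]; exact notMem_empty r)
    · set a := (St n).2 with hadef
      have hPr : P r := (hsub r hr).1
      have har : a ≤ r := (hsub r hr).2.2
      obtain ⟨k, w, hw0, hwk, hws, hwP⟩ := CH a r hPa hPr har
      have mono : ∀ i j, i ≤ j → j ≤ k → w i ≤ w j := by
        intro i j hij hjk
        obtain ⟨d, rfl⟩ := Nat.exists_eq_add_of_le hij
        clear hij
        induction d with
        | zero => exact le_rfl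
        | succ m IHd =>
            have h1 : w i ≤ w (i + m) := IHd (by omega)
            have h2 : w (i + m) < w (i + m + 1) := (hws (i + m) (by omega)).2
            have e : i + (m + 1) = i + m + 1 := by omega
            rw [e]
            exact le_trans h1 h2.le
      have monolt : ∀ i j, i < j → j ≤ k → w i < w j := by
        intro i j hij hjk
        exact lt_of_lt_of_le (hws i (by omega)).2 (mono (i + 1) j hij hjk)
      have hex : ∃ j, j ≤ k ∧ (a, w j) ∉ W1 := ⟨k, le_rfl, by rw [hwk]; exact hnr⟩
      have hex' : ∃ j, j ≤ k ∧ (a, w j) ∉ W1 := hex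
      set j := Nat.find hex with hjdef
      have hjspec : j ≤ k ∧ (a, w j) ∉ W1 := Nat.find_spec hex
      have hjmin : ∀ m, m < j → ¬ (m ≤ k ∧ (a, w m) ∉ W1) := fun m hm => Nat.find_min hex hm
      have hj1 : 1 ≤ j := by
        rcases Nat.eq_zero_or_pos j with hj0 | h
        · exfalso
          have := hjspec.2
          rw [hj0, hw0] at this
          exact this (dW1 a)
        · exact h
      have hjk : j ≤ k := hjspec.1
      have hmem : ∀ m, m < j → (a, w m) ∈ W1 := by
        intro m hm
        have := hjmin m hm
        push_neg at this
        exact this (by omega)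
      have hawj : a < w j := by
        have := monolt 0 j (by omega) hjk
        rwa [hw0] at this
      have haw1 : a < w 1 := by
        have := monolt 0 1 (by omega) (by omega)
        rwa [hw0] at this
      refine ⟨w j, hsup _ (hwP j hjk) hawj, ?_, w 1, w j,
        hsup _ (hwP 1 (by omega)) haw1, hsup _ (hwP j hjk) hawj,
        mono 1 j hj1 hjk, le_rfl, haw1, hawj, ?_⟩
      · refine ⟨w (j - 1), hmem (j - 1) (by omega), ?_⟩
        have h := (hws (j - 1) (by omega)).1
        have e : j - 1 + 1 = j := by omega
        rwa [e] at h
      · intro hpq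
        refine hjspec.2 ⟨w 1, ?_, hpq⟩
        have h := (hws 0 (by omega)).1
        rwa [hw0] at h
  -- cells
  set cells : ℕ → Set Y := fun n => (St n).1 \ (St (n + 1)).1 with hcellsdef
  have hcellssub : ∀ n, cells n ⊆ (St n).1 := fun n => diff_subset
  -- c1
  have hc1 : ∀ n, ∀ x ∈ cells n, P x ∧ g₀ ≤ x := by
    intro n x hx
    rcases hInv n with hemp | ⟨_, _, hsub, _⟩
    · exact absurd (hcellssub n hx) (by rw [hemp]; exact notMem_empty x)
    · exact ⟨(hsub x (hcellssub n hx)).1, (hsub x (hcellssub n hx)).2.1⟩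
  -- largeness (c7)
  have hlarge : ∀ n, (cells (n + 1)).Nonempty → ∃ p q : Y, p ∈ cells n ∧ q ∈ cells n ∧
      g₀ < p ∧ g₀ < q ∧ (p, q) ∉ V := by
    intro n hne
    obtain ⟨u, hu⟩ := hne
    have huR : u ∈ (St (n + 1)).1 := hcellssub (n + 1) hu
    have h : ∃ c, Pred (St n).1 (St n).2 c := by
      by_contra h
      rw [(hneg n h).1] at huR
      exact notMem_empty u huR
    obtain ⟨hR1, hR2⟩ := hpos n h
    obtain ⟨hcR, hcW, p, q, hpR, hqR, hpc, hqc, hap, haq, hpqV⟩ := h.choose_spec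
    rcases hInv n with hemp | ⟨_, hga, hsub, _⟩
    · exact absurd hpR (by rw [hemp]; exact notMem_empty p)
    · refine ⟨p, q, ⟨hpR, ?_⟩, ⟨hqR, ?_⟩, lt_of_le_of_lt hga hap, lt_of_le_of_lt hga haq, hpqV⟩
      · rw [hR1]; rintro ⟨-, h2⟩; exact absurd hpc (not_le.2 h2)
      · rw [hR1]; rintro ⟨-, h2⟩; exact absurd hqc (not_le.2 h2)
  -- boundedness (c3)
  have hc3 : ∀ n, ∃ z : Y, ∀ x ∈ cells n, (z, x) ∈ F := by
    intro n
    refine ⟨(St n).2, ?_⟩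
    intro x hx
    have hxR : x ∈ (St n).1 := hcellssub n hx
    rcases hInv n with hemp | ⟨_, _, hsub, _⟩
    · exact absurd hxR (by rw [hemp]; exact notMem_empty x)
    · have hax : (St n).2 ≤ x := (hsub x hxR).2.2
      by_cases h : ∃ c, Pred (St n).1 (St n).2 c
      · obtain ⟨hR1, _⟩ := hpos n h
        obtain ⟨hcR, hcW, _⟩ := h.choose_spec
        have hxc : x ≤ h.choose := by
          have := hx.2
          rw [hR1] at this
          by_contra hcx
          exact this ⟨hxR, not_le.1 hcx⟩
        rw [hW1def, hVdef] at hcW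
        exact hullF _ _ _ hcW hax hxc
      · have hW : ((St n).2, x) ∈ W1 := by
          by_contra hnW
          exact h (hstage n x hxR hnW)
        have hW' : ((St n).2, x) ∈ Comp W1 T₄ := ⟨x, hW, dT₄ x⟩
        rw [hW1def, hVdef] at hW'
        exact hullF _ _ _ hW' hax le_rfl
  -- ordering (c5)
  have hc5 : ∀ m n, m < n → ∀ x ∈ cells m, ∀ y ∈ cells n, x < y := by
    intro m n hmn x hx y hy
    have hyR : y ∈ (St (m + 1)).1 := hRsub' (m + 1) n (by omega) (hcellssub n hy)
    by_cases h : ∃ c, Pred (St m).1 (St m).2 c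
    · obtain ⟨hR1, _⟩ := hpos m h
      rw [hR1] at hyR
      have hxc : x ≤ h.choose := by
        have := hx.2
        rw [hR1] at this
        by_contra hcx
        exact this ⟨hcellssub m hx, not_le.1 hcx⟩
      exact lt_of_le_of_lt hxc hyR.2
    · rw [(hneg m h).1] at hyR
      exact absurd hyR (notMem_empty y)
  -- downward nonemptiness (c8)
  have hc8 : ∀ m n, m ≤ n → (cells n).Nonempty → (cells m).Nonempty := by
    intro m n hmn
    obtain ⟨d, rfl⟩ := Nat.exists_eq_add_of_le hmn
    clear hmn
    induction d with
    | zero => exact fun h => h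
    | succ e IHd =>
        intro h
        refine IHd ?_
        have : m + (e + 1) = (m + e) + 1 := by omega
        rw [this] at h
        obtain ⟨p, q, hp, _⟩ := hlarge (m + e) h
        exact ⟨p, hp⟩
  -- coverage (c2)
  have hc2 : ∀ x : Y, P x → g₀ ≤ x → ∃ n, x ∈ cells n := by
    intro x hPx hgx
    by_contra hnone
    push_neg at hnone
    have hxR : ∀ n, x ∈ (St n).1 := by
      intro n
      induction n with
      | zero => exact ⟨hPx, hgx⟩
      | succ n IH =>
          by_contra hx1
          exact hnone n ⟨IH, hx1⟩
    have hposall : ∀ n, ∃ c, Pred (St n).1 (St n).2 c := by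
      intro n
      by_contra h
      have := (hneg n h).1
      have hx := hxR (n + 1)
      rw [this] at hx
      exact notMem_empty x hx
    set c : ℕ → Y := fun n => (St (n + 1)).2 with hcdef
    have hc : ∀ n, Pred (St n).1 (St n).2 (c n) ∧ (St (n + 1)).1 = (St n).1 ∩ Ioi (c n) := by
      intro n
      obtain ⟨h1, h2⟩ := hpos n (hposall n)
      constructor
      · have : c n = (hposall n).choose := h2
        rw [this]
        exact (hposall n).choose_spec
      · rw [h1]
        have : c n = (hposall n).choose := h2
        rw [this]
    have hcR : ∀ n, c n ∈ (St n).1 := fun n => (hc n).1.1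
    have hcg : ∀ n, g₀ ≤ c n := by
      intro n
      rcases hInv n with hemp | ⟨_, _, hsub, _⟩
      · exact absurd (hcR n) (by rw [hemp]; exact notMem_empty _)
      · exact (hsub _ (hcR n)).2.1
    have hxc : ∀ n, c n < x := by
      intro n
      have hx := hxR (n + 1)
      rw [(hc n).2] at hx
      exact hx.2
    have hcmonolt : ∀ n, c n < c (n + 1) := by
      intro n
      have h := hcR (n + 1)
      rw [(hc n).2] at h
      exact h.2
    have hcmono : ∀ m n, m ≤ n → c m ≤ c n := by
      intro m n hmn
      obtain ⟨d, rfl⟩ := Nat.exists_eq_add_of_le hmn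
      clear hmn
      induction d with
      | zero => exact le_rfl
      | succ e IHd =>
          have : m + (e + 1) = (m + e) + 1 := by omega
          rw [this]
          exact le_trans IHd (hcmonolt (m + e)).le
    have hcincells : ∀ n, c n ∈ cells n := by
      intro n
      refine ⟨hcR n, ?_⟩
      rw [(hc n).2]
      rintro ⟨-, h2⟩
      exact lt_irrefl _ h2
    obtain ⟨k, w, hw0, hwk, hws, hwP⟩ := CH g₀ x hPg hPx hgx
    set v : ℕ → ℕ := fun i => if h : ∃ n, w i ≤ c n then Nat.find h else 0 with hvdef
    set Γ : Finset ℕ := (Finset.range (k + 1)).image v with hΓdef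
    have hΓne : Γ.Nonempty := ⟨v 0, Finset.mem_image_of_mem v (by simp)⟩
    set γ := Γ.max' hΓne with hγdef
    have hbound : ∀ i, i ≤ k → (∃ n, w i ≤ c n) → w i ≤ c γ := by
      intro i hik h
      have hv : v i = Nat.find h := dif_pos h
      have hvmem : v i ∈ Γ := Finset.mem_image_of_mem v (Finset.mem_range.2 (by omega))
      have hvγ : v i ≤ γ := Γ.le_max' _ hvmem
      have hspec := Nat.find_spec h
      rw [← hv] at hspec
      exact le_trans hspec (hcmono _ _ hvγ)
    have hP0' : w 0 ≤ c γ := by rw [hw0]; exact hcg γ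
    set i₀ := Nat.findGreatest (fun i => w i ≤ c γ) k with hi₀def
    have hi₀P : w i₀ ≤ c γ := Nat.findGreatest_spec (P := fun i => w i ≤ c γ) (Nat.zero_le k) hP0'
    have hi₀le : i₀ ≤ k := Nat.findGreatest_le (P := fun i => w i ≤ c γ) k
    have hi₀lt : i₀ < k := by
      rcases eq_or_lt_of_le hi₀le with heq | h
      · exfalso
        rw [heq, hwk] at hi₀P
        exact absurd hi₀P (not_le.2 (hxc γ))
      · exact h
    have hnext : ¬ (w (i₀ + 1) ≤ c γ) :=
      Nat.findGreatest_is_greatest (P := fun i => w i ≤ c γ) (Nat.lt_succ_self i₀) (by omega)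
    have hnext2 : ∀ n, c n < w (i₀ + 1) := by
      intro n
      by_contra hle
      push_neg at hle
      exact hnext (hbound (i₀ + 1) (by omega) ⟨n, hle⟩)
    obtain ⟨p, q, hp, hq, hgp, hgq, hpqV⟩ := hlarge (γ + 1) ⟨c (γ + 2), hcincells (γ + 2)⟩
    -- positions of p and q
    have hposn : ∀ z, z ∈ cells (γ + 1) → c γ < z ∧ z ≤ c (γ + 1) := by
      intro z hz
      have h1 : z ∈ (St (γ + 1)).1 := hcellssub (γ + 1) hz
      have h2 := h1
      rw [(hc γ).2] at h2
      constructor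
      · exact h2.2
      · have := hz.2
        rw [(hc (γ + 1)).2] at this
        by_contra hcx
        exact this ⟨h1, not_le.1 hcx⟩
    have hstep := (hws i₀ hi₀lt).1
    have hTp : (w i₀, p) ∈ T₇ :=
      hull₇ _ _ _ hstep (le_trans hi₀P (hposn p hp).1.le)
        (le_trans (hposn p hp).2 (hnext2 (γ + 1)).le)
    have hTq : (w i₀, q) ∈ T₇ :=
      hull₇ _ _ _ hstep (le_trans hi₀P (hposn q hq).1.le)
        (le_trans (hposn q hq).2 (hnext2 (γ + 1)).le)
    exact hpqV ⟨w i₀, sT₇ _ _ hTp, hTq⟩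
  exact ⟨cells, hc1, hc2, hc3, hc5, hlarge, hc8⟩

end Core

/-- Theorem 2: a linearly ordered coarse space has asymptotic dimension at most 1. -/
theorem asdim_le_one_of_linearly_ordered [LinearOrder X]
    (𝓔 : Set (Set (X × X))) (hc : IsCoarse 𝓔)
    (hconn : CoarseConnected 𝓔) (hcomp : Compatible 𝓔) :
    ∀ E ∈ 𝓔, ∃ F ∈ 𝓔, ∃ M0 M1 : Set (Set X),
      ⋃₀ (M0 ∪ M1) = (univ : Set X) ∧
      (∀ A ∈ M0 ∪ M1, ∃ x : X, A ⊆ Ball F x) ∧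
      (∀ A ∈ M0, ∀ B ∈ M0, A ≠ B → BallSet E A ∩ B = ∅) ∧
      (∀ A ∈ M1, ∀ B ∈ M1, A ≠ B → BallSet E A ∩ B = ∅) := by
  intro E hE
  classical
  -- the tower of entourages
  set T₁ : Set (X × X) := E ∪ EInv E with hT₁def
  have hT₁mem : T₁ ∈ 𝓔 := coarse_union hc hE (hc.2.2.1 E hE)
  have sT₁ : ∀ x y : X, (x, y) ∈ T₁ → (y, x) ∈ T₁ := by
    rintro x y (h | h)
    · exact Or.inr h
    · exact Or.inl h
  obtain ⟨T₂, hT₂mem, hT₁₂, sT₂, hullA₂, hullB₂⟩ := hull_ent hc hcomp hT₁mem sT₁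
  obtain ⟨T₃, hT₃mem, hT₂₃, sT₃, hullA₃, hullB₃⟩ := hull_ent hc hcomp hT₂mem sT₂
  set T₄ : Set (X × X) := Comp T₃ T₃ with hT₄def
  have hT₄mem : T₄ ∈ 𝓔 := hc.2.1 _ hT₃mem _ hT₃mem
  have dT₃ : ∀ x : X, (x, x) ∈ T₃ := hc.1 _ hT₃mem
  have sT₄ : ∀ x y : X, (x, y) ∈ T₄ → (y, x) ∈ T₄ := by
    rintro x y ⟨z, h1, h2⟩
    exact ⟨z, sT₃ _ _ h2, sT₃ _ _ h1⟩
  have dT₄ : ∀ x : X, (x, x) ∈ T₄ := fun x => ⟨x, dT₃ x, dT₃ x⟩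
  have hT₃₄ : T₃ ⊆ T₄ := by
    rintro ⟨x, y⟩ h
    exact ⟨y, h, dT₃ y⟩
  obtain ⟨T₇, hT₇mem, hT₄₇, sT₇, hullA₇, hullB₇⟩ := hull_ent hc hcomp hT₄mem sT₄
  have dT₇ : ∀ x : X, (x, x) ∈ T₇ := hc.1 _ hT₇mem
  set CWT : Set (X × X) := Comp (Comp T₄ (Comp T₇ T₇)) T₄ with hCWTdef
  have hCWTmem : CWT ∈ 𝓔 :=
    hc.2.1 _ (hc.2.1 _ hT₄mem _ (hc.2.1 _ hT₇mem _ hT₇mem)) _ hT₄mem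
  set S₈ : Set (X × X) := CWT ∪ EInv CWT with hS₈def
  have hS₈mem : S₈ ∈ 𝓔 := coarse_union hc hCWTmem (hc.2.2.1 _ hCWTmem)
  have sS₈ : ∀ x y : X, (x, y) ∈ S₈ → (y, x) ∈ S₈ := by
    rintro x y (h | h)
    · exact Or.inr h
    · exact Or.inl h
  obtain ⟨F, hFmem, hS₈F, sF, hullAF, hullBF⟩ := hull_ent hc hcomp hS₈mem sS₈
  refine ⟨F, hFmem, ?_⟩
  -- chains and galaxies
  have hET₂ : ∀ {x y : X}, (x, y) ∈ E → (x, y) ∈ T₂ := fun h => hT₁₂ (Or.inl h)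
  have hET₄ : ∀ {x y : X}, (x, y) ∈ E → (x, y) ∈ T₄ := fun h => hT₃₄ (hT₂₃ (hET₂ h))
  have equivRel : Equivalence (RelChain T₂) :=
    ⟨relChain_refl T₂, fun h => relChain_symm sT₂ h, fun h1 h2 => relChain_trans h1 h2⟩
  set sd : Setoid X := ⟨RelChain T₂, equivRel⟩ with hsddef
  set rep : X → X := fun x => (@Quotient.mk X sd x).out with hrepdef
  have hrep_rel : ∀ x : X, RelChain T₂ (rep x) x := fun x => @Quotient.mk_out X sd x
  have hrep_inv : ∀ x y : X, RelChain T₂ x y → rep x = rep y := fun x y h =>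
    congrArg Quotient.out (Quotient.sound h)
  have hrep_idem : ∀ x : X, rep (rep x) = rep x := fun x => hrep_inv _ _ (hrep_rel x)
  -- the straightened chain property
  have CHup : ∀ g x y : X, RelChain T₂ g x → RelChain T₂ g y → x ≤ y →
      ∃ (k : ℕ) (w : ℕ → X), w 0 = x ∧ w k = y ∧
        (∀ i, i < k → (w i, w (i + 1)) ∈ T₄ ∧ w i < w (i + 1)) ∧
        (∀ i, i ≤ k → RelChain T₂ g (w i)) := by
    intro g x y hgx hgy hxy
    obtain ⟨k0, w0, hw00, hw0k, hw0s⟩ := relChain_trans (relChain_symm sT₂ hgx) hgy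
    obtain ⟨K, W, hW0, hWK, hWs, hWpts⟩ :=
      ext_chain T₂ T₃ dT₃ sT₃ (fun a b c h h1 h2 => hullA₃ a b c h h1 h2)
        k0 w0 hw0s x y hw00 hw0k hxy
    refine ⟨K, W, hW0, hWK, hWs, ?_⟩
    intro i hi
    obtain ⟨j, hj, hji⟩ := hWpts i hi
    rw [hji]
    have hx0 : RelChain T₂ x (w0 j) := by
      have := relChain_point hw0s hj
      rwa [hw00] at this
    exact relChain_trans hgx hx0
  have CHdown : ∀ g x y : X, RelChain T₂ g x → RelChain T₂ g y → y ≤ x →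
      ∃ (k : ℕ) (w : ℕ → X), w 0 = x ∧ w k = y ∧
        (∀ i, i < k → (w i, w (i + 1)) ∈ T₄ ∧ w (i + 1) < w i) ∧
        (∀ i, i ≤ k → RelChain T₂ g (w i)) := by
    intro g x y hgx hgy hyx
    obtain ⟨K, W, hW0, hWK, hWs, hWpts⟩ := CHup g y x hgy hgx hyx
    refine ⟨K, fun i => W (K - i), ?_, ?_, ?_, ?_⟩
    · show W (K - 0) = x
      rw [Nat.sub_zero]; exact hWK
    · show W (K - K) = y
      rw [Nat.sub_self]; exact hW0
    · intro i hi
      have e1 : K - i = (K - (i + 1)) + 1 := by omega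
      have h := hWs (K - (i + 1)) (by omega)
      constructor
      · show (W (K - i), W (K - (i + 1))) ∈ T₄
        rw [e1]; exact sT₄ _ _ h.1
      · show W (K - (i + 1)) < W (K - i)
        rw [e1]; exact h.2
    · intro i hi
      exact hWpts (K - i) (by omega)
  -- the two sided decompositions, for every basepoint
  have hup : ∀ g : X, ∃ cells : ℕ → Set X,
      (∀ n, ∀ x ∈ cells n, RelChain T₂ g x ∧ g ≤ x) ∧
      (∀ x : X, RelChain T₂ g x → g ≤ x → ∃ n, x ∈ cells n) ∧
      (∀ n, ∃ z : X, ∀ x ∈ cells n, (z, x) ∈ F) ∧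
      (∀ m n, m < n → ∀ x ∈ cells m, ∀ y ∈ cells n, x < y) ∧
      (∀ n, (cells (n + 1)).Nonempty → ∃ p q : X, p ∈ cells n ∧ q ∈ cells n ∧
        g < p ∧ g < q ∧ (p, q) ∉ Comp T₇ T₇) ∧
      (∀ m n, m ≤ n → (cells n).Nonempty → (cells m).Nonempty) := by
    intro g
    exact chopCore T₄ T₇ F (RelChain T₂ g) g (relChain_refl T₂ g) dT₄ dT₇ sT₇
      (fun x y z h h1 h2 => (hullA₇ x y z h h1 h2).1)
      (fun x y z h h1 h2 => (hullAF x y z (Or.inl h) h1 h2).1)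
      (CHup g)
  have hdown : ∀ g : X, ∃ cells : ℕ → Set X,
      (∀ n, ∀ x ∈ cells n, RelChain T₂ g x ∧ x ≤ g) ∧
      (∀ x : X, RelChain T₂ g x → x ≤ g → ∃ n, x ∈ cells n) ∧
      (∀ n, ∃ z : X, ∀ x ∈ cells n, (z, x) ∈ F) ∧
      (∀ m n, m < n → ∀ x ∈ cells m, ∀ y ∈ cells n, y < x) ∧
      (∀ n, (cells (n + 1)).Nonempty → ∃ p q : X, p ∈ cells n ∧ q ∈ cells n ∧
        p < g ∧ q < g ∧ (p, q) ∉ Comp T₇ T₇) ∧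
      (∀ m n, m ≤ n → (cells n).Nonempty → (cells m).Nonempty) := by
    intro g
    obtain ⟨cells, h1, h2, h3, h5, h7, h8⟩ :=
      @chopCore X (inferInstanceAs (LinearOrder Xᵒᵈ)) T₄ T₇ F (RelChain T₂ g) g
        (relChain_refl T₂ g) dT₄ dT₇ sT₇
        (fun x y z h h1 h2 => (hullB₇ x y z h h2 h1).1)
        (fun x y z h h1 h2 => (hullBF x y z (Or.inl h) h2 h1).1)
        (fun x y hx hy hxy => CHdown g x y hx hy hxy)
    exact ⟨cells, h1, h2, h3, h5, h7, h8⟩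
  choose U hU using hup
  choose L hL using hdown
  set L' : X → ℕ → Set X := fun g n => L g n \ {g} with hL'def
  set M0 : Set (Set X) := {A | A.Nonempty ∧ ∃ g : X, rep g = g ∧
    ((∃ m : ℕ, A = U g (2 * m)) ∨ (∃ m : ℕ, A = L' g (2 * m + 1)))} with hM0def
  set M1 : Set (Set X) := {A | A.Nonempty ∧ ∃ g : X, rep g = g ∧
    ((∃ m : ℕ, A = U g (2 * m + 1)) ∨ (∃ m : ℕ, A = L' g (2 * m)))} with hM1def
  -- straddle lemma
  have straddle : ∀ x y p q : X, (x, y) ∈ T₄ → x < p → p < y → x < q → q < y →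
      (p, q) ∈ Comp T₇ T₇ := fun x y p q h hp1 hp2 hq1 hq2 =>
    ⟨x, sT₇ _ _ (hullA₇ x y p h hp1.le hp2.le).1, (hullA₇ x y q h hq1.le hq2.le).1⟩
  have same_g : ∀ g g' x y : X, rep g = g → rep g' = g' → RelChain T₂ g x →
      RelChain T₂ g' y → (x, y) ∈ E → g = g' := by
    intro g g' x y hg hg' hgx hg'y hxy
    have h1 : rep g = rep x := hrep_inv g x hgx
    have h2 : rep g' = rep y := hrep_inv g' y hg'y
    have h3 : rep x = rep y := hrep_inv x y (relChain_single (hET₂ hxy))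
    rw [← hg, ← hg', h1, h2, h3]
  -- separation lemmas
  have sepUU : ∀ g : X, ∀ a b : ℕ, a + 2 ≤ b → ∀ u v : X, u ∈ U g a → v ∈ U g b →
      (u, v) ∈ T₄ → False := by
    intro g a b hab u v hu hv hT
    have hne2 : (U g (a + 1 + 1)).Nonempty := by
      have e : a + 1 + 1 = a + 2 := by omega
      rw [e]
      exact (hU g).2.2.2.2.2 (a + 2) b hab ⟨v, hv⟩
    obtain ⟨p, q, hp, hq, -, -, hpqV⟩ := (hU g).2.2.2.2.1 (a + 1) hne2
    have h1 : u < p := (hU g).2.2.2.1 a (a + 1) (by omega) u hu p hp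
    have h2 : p < v := (hU g).2.2.2.1 (a + 1) b (by omega) p hp v hv
    have h3 : u < q := (hU g).2.2.2.1 a (a + 1) (by omega) u hu q hq
    have h4 : q < v := (hU g).2.2.2.1 (a + 1) b (by omega) q hq v hv
    exact hpqV (straddle u v p q hT h1 h2 h3 h4)
  have sepLL : ∀ g : X, ∀ a b : ℕ, a + 2 ≤ b → ∀ u v : X, u ∈ L' g a → v ∈ L' g b →
      (v, u) ∈ T₄ → False := by
    intro g a b hab u v hu hv hT
    have hu' : u ∈ L g a := hu.1
    have hv' : v ∈ L g b := hv.1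
    have hne2 : (L g (a + 1 + 1)).Nonempty := by
      have e : a + 1 + 1 = a + 2 := by omega
      rw [e]
      exact (hL g).2.2.2.2.2 (a + 2) b hab ⟨v, hv'⟩
    obtain ⟨p, q, hp, hq, -, -, hpqV⟩ := (hL g).2.2.2.2.1 (a + 1) hne2
    have h1 : p < u := (hL g).2.2.2.1 a (a + 1) (by omega) u hu' p hp
    have h2 : v < p := (hL g).2.2.2.1 (a + 1) b (by omega) p hp v hv'
    have h3 : q < u := (hL g).2.2.2.1 a (a + 1) (by omega) u hu' q hq
    have h4 : v < q := (hL g).2.2.2.1 (a + 1) b (by omega) q hq v hv'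
    exact hpqV (straddle v u p q hT h2 h1 h4 h3)
  have sepMix : ∀ g : X, ∀ a b : ℕ, (b = 0 → 1 ≤ a) → ∀ u l : X, u ∈ U g a → l ∈ L' g b →
      (l, u) ∈ T₄ → False := by
    intro g a b hba u l hu hl hT
    have hlg : l < g := by
      refine lt_of_le_of_ne (((hL g).1 b l hl.1).2) ?_
      intro h
      exact hl.2 (by rw [h]; exact rfl)
    have hgu : g ≤ u := ((hU g).1 a u hu).2
    by_cases hb : 1 ≤ b
    · have hne : (L g (0 + 1)).Nonempty := by
        simpa using (hL g).2.2.2.2.2 1 b hb ⟨l, hl.1⟩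
      obtain ⟨p, q, hp, hq, hpg, hqg, hpqV⟩ := (hL g).2.2.2.2.1 0 hne
      have h1 : l < p := (hL g).2.2.2.1 0 b (by omega) p hp l hl.1
      have h2 : p < u := lt_of_lt_of_le hpg hgu
      have h3 : l < q := (hL g).2.2.2.1 0 b (by omega) q hq l hl.1
      have h4 : q < u := lt_of_lt_of_le hqg hgu
      exact hpqV (straddle l u p q hT h1 h2 h3 h4)
    · have ha : 1 ≤ a := hba (by omega)
      have hne : (U g (0 + 1)).Nonempty := by
        simpa using (hU g).2.2.2.2.2 1 a ha ⟨u, hu⟩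
      obtain ⟨p, q, hp, hq, hgp, hgq, hpqV⟩ := (hU g).2.2.2.2.1 0 hne
      have h1 : l < p := lt_trans hlg hgp
      have h2 : p < u := (hU g).2.2.2.1 0 a (by omega) p hp u hu
      have h3 : l < q := lt_trans hlg hgq
      have h4 : q < u := (hU g).2.2.2.1 0 a (by omega) q hq u hu
      exact hpqV (straddle l u p q hT h1 h2 h3 h4)
  refine ⟨M0, M1, ?_, ?_, ?_, ?_⟩
  · -- coverage
    ext x
    simp only [mem_sUnion, mem_univ, iff_true]
    have hrel : RelChain T₂ (rep x) x := hrep_rel x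
    have hgg : rep (rep x) = rep x := hrep_idem x
    rcases le_or_gt (rep x) x with hge | hlt
    · obtain ⟨n, hn⟩ := (hU (rep x)).2.1 x hrel hge
      rcases Nat.even_or_odd n with ⟨m, hm⟩ | ⟨m, hm⟩
      · refine ⟨U (rep x) n, Or.inl ⟨⟨x, hn⟩, rep x, hgg, Or.inl ⟨m, ?_⟩⟩, hn⟩
        rw [show n = 2 * m from by omega]
      · refine ⟨U (rep x) n, Or.inr ⟨⟨x, hn⟩, rep x, hgg, Or.inl ⟨m, ?_⟩⟩, hn⟩
        rw [show n = 2 * m + 1 from by omega]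
    · obtain ⟨n, hn⟩ := (hL (rep x)).2.1 x hrel hlt.le
      have hn' : x ∈ L' (rep x) n := ⟨hn, by simpa using ne_of_lt hlt⟩
      rcases Nat.even_or_odd n with ⟨m, hm⟩ | ⟨m, hm⟩
      · refine ⟨L' (rep x) n, Or.inr ⟨⟨x, hn'⟩, rep x, hgg, Or.inr ⟨m, ?_⟩⟩, hn'⟩
        rw [show n = 2 * m from by omega]
      · refine ⟨L' (rep x) n, Or.inl ⟨⟨x, hn'⟩, rep x, hgg, Or.inr ⟨m, ?_⟩⟩, hn'⟩
        rw [show n = 2 * m + 1 from by omega]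
  · -- boundedness
    rintro A (⟨hne, g, hg, (⟨m, rfl⟩ | ⟨m, rfl⟩)⟩ | ⟨hne, g, hg, (⟨m, rfl⟩ | ⟨m, rfl⟩)⟩)
    · obtain ⟨z, hz⟩ := (hU g).2.2.1 (2 * m)
      exact ⟨z, fun x hx => hz x hx⟩
    · obtain ⟨z, hz⟩ := (hL g).2.2.1 (2 * m + 1)
      exact ⟨z, fun x hx => hz x hx.1⟩
    · obtain ⟨z, hz⟩ := (hU g).2.2.1 (2 * m + 1)
      exact ⟨z, fun x hx => hz x hx⟩
    · obtain ⟨z, hz⟩ := (hL g).2.2.1 (2 * m)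
      exact ⟨z, fun x hx => hz x hx.1⟩
  · -- M0 separation
    rintro A ⟨hAne, g, hg, hAform⟩ B ⟨hBne, g', hg', hBform⟩ hne
    rw [eq_empty_iff_forall_notMem]
    rintro y ⟨hyA, hyB⟩
    simp only [BallSet, mem_iUnion] at hyA
    obtain ⟨x, hxA, hyx⟩ := hyA
    have hxy : (x, y) ∈ E := hyx
    rcases hAform with ⟨m, rfl⟩ | ⟨m, rfl⟩ <;> rcases hBform with ⟨m', rfl⟩ | ⟨m', rfl⟩
    · -- U, U
      have hgg' : g = g' := same_g g g' x y hg hg' ((hU g).1 _ x hxA).1 ((hU g').1 _ y hyB).1 hxy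
      subst hgg'
      have hmm : 2 * m ≠ 2 * m' := fun h => hne (by rw [h])
      rcases lt_or_gt_of_ne hmm with h | h
      · exact sepUU g (2 * m) (2 * m') (by omega) x y hxA hyB (hET₄ hxy)
      · exact sepUU g (2 * m') (2 * m) (by omega) y x hyB hxA (sT₄ _ _ (hET₄ hxy))
    · -- U, L'
      have hgg' : g = g' := same_g g g' x y hg hg' ((hU g).1 _ x hxA).1 ((hL g').1 _ y hyB.1).1 hxy
      subst hgg'
      exact sepMix g (2 * m) (2 * m' + 1) (fun h => by omega) x y hxA hyB (sT₄ _ _ (hET₄ hxy))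
    · -- L', U
      have hgg' : g = g' := same_g g g' x y hg hg' ((hL g).1 _ x hxA.1).1 ((hU g').1 _ y hyB).1 hxy
      subst hgg'
      exact sepMix g (2 * m') (2 * m + 1) (fun h => by omega) y x hyB hxA (hET₄ hxy)
    · -- L', L'
      have hgg' : g = g' := same_g g g' x y hg hg' ((hL g).1 _ x hxA.1).1 ((hL g').1 _ y hyB.1).1 hxy
      subst hgg'
      have hmm : 2 * m + 1 ≠ 2 * m' + 1 := fun h => hne (by rw [h])
      rcases lt_or_gt_of_ne hmm with h | h
      · exact sepLL g (2 * m + 1) (2 * m' + 1) (by omega) x y hxA hyB (sT₄ _ _ (hET₄ hxy))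
      · exact sepLL g (2 * m' + 1) (2 * m + 1) (by omega) y x hyB hxA (hET₄ hxy)
  · -- M1 separation
    rintro A ⟨hAne, g, hg, hAform⟩ B ⟨hBne, g', hg', hBform⟩ hne
    rw [eq_empty_iff_forall_notMem]
    rintro y ⟨hyA, hyB⟩
    simp only [BallSet, mem_iUnion] at hyA
    obtain ⟨x, hxA, hyx⟩ := hyA
    have hxy : (x, y) ∈ E := hyx
    rcases hAform with ⟨m, rfl⟩ | ⟨m, rfl⟩ <;> rcases hBform with ⟨m', rfl⟩ | ⟨m', rfl⟩
    · have hgg' : g = g' := same_g g g' x y hg hg' ((hU g).1 _ x hxA).1 ((hU g').1 _ y hyB).1 hxy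
      subst hgg'
      have hmm : 2 * m + 1 ≠ 2 * m' + 1 := fun h => hne (by rw [h])
      rcases lt_or_gt_of_ne hmm with h | h
      · exact sepUU g (2 * m + 1) (2 * m' + 1) (by omega) x y hxA hyB (hET₄ hxy)
      · exact sepUU g (2 * m' + 1) (2 * m + 1) (by omega) y x hyB hxA (sT₄ _ _ (hET₄ hxy))
    · have hgg' : g = g' := same_g g g' x y hg hg' ((hU g).1 _ x hxA).1 ((hL g').1 _ y hyB.1).1 hxy
      subst hgg'
      exact sepMix g (2 * m + 1) (2 * m') (fun h => by omega) x y hxA hyB (sT₄ _ _ (hET₄ hxy))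
    · have hgg' : g = g' := same_g g g' x y hg hg' ((hL g).1 _ x hxA.1).1 ((hU g').1 _ y hyB).1 hxy
      subst hgg'
      exact sepMix g (2 * m' + 1) (2 * m) (fun h => by omega) y x hyB hxA (hET₄ hxy)
    · have hgg' : g = g' := same_g g g' x y hg hg' ((hL g).1 _ x hxA.1).1 ((hL g').1 _ y hyB.1).1 hxy
      subst hgg'
      have hmm : 2 * m ≠ 2 * m' := fun h => hne (by rw [h])
      rcases lt_or_gt_of_ne hmm with h | h
      · exact sepLL g (2 * m) (2 * m') (by omega) x y hxA hyB (sT₄ _ _ (hET₄ hxy))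
      · exact sepLL g (2 * m') (2 * m) (by omega) y x hyB hxA (hET₄ hxy)
end

section
/- Let (X, 𝓔, ≤) be a linearly ordered coarse space, let E ∈ 𝓔, and let 𝔉 be a family of nonempty subsets of X. If f : 𝔉 → X is any map such that f(A) is a right E-end of A for every A ∈ 𝔉, then f is macro-uniform (and hence an 𝔉-selector). -/
open Set

variable {X : Type*}

/-- Any map choosing a right `E`-end of each member of `𝔉` is macro-uniform,
hence an `𝔉`-selector. -/
theorem right_end_choice_is_macro_uniform [LinearOrder X]
    (𝓔 : Set (Set (X × X))) (hc : IsCoarse 𝓔)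
    (hconn : CoarseConnected 𝓔) (hcomp : Compatible 𝓔)
    (E : Set (X × X)) (hE : E ∈ 𝓔)
    (𝔉 : Set (Set X)) (hne : ∀ A ∈ 𝔉, A.Nonempty)
    (f : Set X → X) (hf : ∀ A ∈ 𝔉, RightEnd E A (f A)) :
    (∀ H ∈ 𝓔, ∃ H' ∈ 𝓔, ∀ Y ∈ 𝔉, ∀ Z ∈ 𝔉,
      Y ⊆ BallSet H Z → Z ⊆ BallSet H Y → (f Y, f Z) ∈ H') ∧
    ∀ A ∈ 𝔉, f A ∈ A := by
  obtain ⟨hdiag, hcomp', hinv, hdown⟩ := hc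
  refine ⟨?_, fun A hA => (hf A hA).1⟩
  intro H hH
  obtain ⟨F, hF, hFprop⟩ := hcomp H hH
  set G : Set (X × X) := Comp E H ∪ Comp (EInv F) H with hGdef
  have hGdiag : ∀ x : X, (x, x) ∈ G := fun x =>
    Or.inl ⟨x, hdiag E hE x, hdiag H hH x⟩
  have hG : G ∈ 𝓔 := by
    refine hdown (Comp (Comp E H) (Comp (EInv F) H))
      (hcomp' (Comp E H) (hcomp' E hE H hH) (Comp (EInv F) H)
        (hcomp' (EInv F) (hinv F hF) H hH)) G hGdiag ?_
    rintro ⟨x, y⟩ (h | h)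
    · exact ⟨y, h, ⟨y, hdiag F hF y, hdiag H hH y⟩⟩
    · exact ⟨x, ⟨x, hdiag E hE x, hdiag H hH x⟩, h⟩
  have hGinv : EInv G ∈ 𝓔 := hinv G hG
  have hH'diag : ∀ x : X, (x, x) ∈ G ∪ EInv G := fun x => Or.inl (hGdiag x)
  have hH' : G ∪ EInv G ∈ 𝓔 := by
    refine hdown (Comp G (EInv G)) (hcomp' G hG (EInv G) hGinv) _ hH'diag ?_
    rintro ⟨x, y⟩ (h | h)
    · exact ⟨y, h, hGdiag y⟩
    · exact ⟨x, hGdiag x, h⟩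
  refine ⟨G ∪ EInv G, hH', ?_⟩
  have key : ∀ Y ∈ 𝔉, ∀ Z ∈ 𝔉, Z ⊆ BallSet H Y → f Y ≤ f Z → (f Y, f Z) ∈ G := by
    intro Y hY Z hZ hsub hle
    have hz : f Z ∈ BallSet H Y := hsub (hf Z hZ).1
    obtain ⟨u, hu, huz⟩ := by
      simpa [BallSet, Ball] using hz
    by_cases hue : u ∈ Ball E (f Y)
    · exact Or.inl ⟨u, hue, huz⟩
    · have hlt : u < f Y := (hf Y hY).2 u hu hue
      have huF : f Y ∈ Ball F u := by
        by_contra hnot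
        exact absurd (hFprop u (f Y) hlt hnot (f Z) huz) (not_lt.mpr hle)
      exact Or.inr ⟨u, huF, huz⟩
  intro Y hY Z hZ hYZ hZY
  rcases le_total (f Y) (f Z) with hle | hle
  · exact Or.inl (key Y hY Z hZ hZY hle)
  · exact Or.inr (key Z hZ Y hY hYZ hle)
end

section
/- Let 𝓔 be a coarse structure on a set X and ≤ a linear order on X. Then the following three conditions are equivalent: (1) for every E ∈ 𝓔 there exists F ∈ 𝓔 such that if x < y and y ∉ F[x], then x′ < y for every x′ ∈ E[x]; (2) for every E ∈ 𝓔 there exists H ∈ 𝓔 such that if y < x and y ∉ H[x], then y < x′ for every x′ ∈ E[x]; (3) for every E ∈ 𝓔 there exists K ∈ 𝓔 such that if x < y and y ∉ K[x], then x′ < y′ for all x′ ∈ E[x] and y′ ∈ E[y]. -/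
open Set

variable {X : Type*}

/-- The three conditions defining compatibility of a linear order with a coarse
structure are equivalent. -/
theorem compatibility_conditions_tfae [LinearOrder X]
    (𝓔 : Set (Set (X × X))) (hc : IsCoarse 𝓔) :
    List.TFAE [
      ∀ E ∈ 𝓔, ∃ F ∈ 𝓔, ∀ x y : X, x < y → y ∉ Ball F x → ∀ x' ∈ Ball E x, x' < y,
      ∀ E ∈ 𝓔, ∃ H ∈ 𝓔, ∀ x y : X, y < x → y ∉ Ball H x → ∀ x' ∈ Ball E x, y < x',
      ∀ E ∈ 𝓔, ∃ K ∈ 𝓔, ∀ x y : X, x < y → y ∉ Ball K x →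
        ∀ x' ∈ Ball E x, ∀ y' ∈ Ball E y, x' < y'] := by
  obtain ⟨hdiag, hcomp, hinv, hsub⟩ := hc
  have hunion : ∀ E ∈ 𝓔, ∀ F ∈ 𝓔, E ∪ F ∈ 𝓔 := by
    intro E hE F hF
    refine hsub (Comp E F) (hcomp E hE F hF) (E ∪ F)
      (fun x => Or.inl (hdiag E hE x)) ?_
    rintro ⟨a, b⟩ (hab | hab)
    · exact ⟨b, hab, hdiag F hF b⟩
    · exact ⟨a, hdiag E hE a, hab⟩
  have hsym : ∀ E ∈ 𝓔, E ∪ EInv E ∈ 𝓔 := fun E hE =>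
    hunion E hE (EInv E) (hinv E hE)
  tfae_have 1 → 2 := by
    intro h1 E hE
    set E₁ := E ∪ EInv E with hE₁def
    have hE₁ : E₁ ∈ 𝓔 := hsym E hE
    obtain ⟨F, hF, hFp⟩ := h1 E₁ hE₁
    refine ⟨Comp E₁ F, hcomp E₁ hE₁ F hF, ?_⟩
    intro x y hyx hyH x' hx'
    by_contra hle
    push_neg at hle
    apply hyH
    rcases eq_or_lt_of_le hle with heq | hlt
    · exact ⟨x', Or.inl hx', heq ▸ hdiag F hF x'⟩
    · have hyF : y ∈ Ball F x' := by
        by_contra hnotF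
        exact absurd (hFp x' y hlt hnotF x (Or.inr hx')) (not_lt.mpr hyx.le)
      exact ⟨x', Or.inl hx', hyF⟩
  tfae_have 2 → 1 := by
    intro h2 E hE
    set E₁ := E ∪ EInv E with hE₁def
    have hE₁ : E₁ ∈ 𝓔 := hsym E hE
    obtain ⟨H, hH, hHp⟩ := h2 E₁ hE₁
    refine ⟨Comp E₁ H, hcomp E₁ hE₁ H hH, ?_⟩
    intro x y hxy hyF x' hx'
    by_contra hle
    push_neg at hle
    apply hyF
    rcases eq_or_lt_of_le hle with heq | hlt
    · exact ⟨x', Or.inl hx', heq.symm ▸ hdiag H hH x'⟩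
    · have hyH : y ∈ Ball H x' := by
        by_contra hnotH
        exact absurd (hHp x' y hlt hnotH x (Or.inr hx')) (not_lt.mpr hxy.le)
      exact ⟨x', Or.inl hx', hyH⟩
  tfae_have 1 → 3 := by
    intro h1 E hE
    have h2 := tfae_1_to_2 h1
    set E₁ := E ∪ EInv E with hE₁def
    have hE₁ : E₁ ∈ 𝓔 := hsym E hE
    obtain ⟨F, hF, hFp⟩ := h1 E₁ hE₁
    obtain ⟨H, hH, hHp⟩ := h2 E₁ hE₁
    have hG : Comp E₁ (EInv H) ∈ 𝓔 := hcomp E₁ hE₁ (EInv H) (hinv H hH)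
    refine ⟨F ∪ Comp E₁ (EInv H), hunion F hF _ hG, ?_⟩
    intro x y hxy hyK x' hx' y' hy'
    by_contra hle
    push_neg at hle
    apply hyK
    have hyF : y ∉ Ball F x := fun hc => hyK (Or.inl hc)
    have hx'y : x' < y := hFp x y hxy hyF x' (Or.inl hx')
    have hx'H : x' ∈ Ball H y := by
      by_contra hnot
      exact absurd (hHp y x' hx'y hnot y' (Or.inl hy')) (not_lt.mpr hle)
    exact Or.inr ⟨x', Or.inl hx', hx'H⟩
  tfae_have 3 → 1 := by
    intro h3 E hE
    obtain ⟨K, hK, hKp⟩ := h3 E hE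
    exact ⟨K, hK, fun x y hxy hyK x' hx' =>
      hKp x y hxy hyK x' hx' y (hdiag E hE y)⟩
  tfae_finish
end

section
/- Let (X, 𝓔, ≤) be a linearly ordered coarse space. Then the map A ↦ min A on two-element subsets of X is a 2-selector: for every E ∈ 𝓔 there exists E′ ∈ 𝓔 such that for all two-element subsets A, B ⊆ X with A ⊆ E[B] and B ⊆ E[A], one has (min A, min B) ∈ E′. -/
open Set

variable {X : Type*}

/-- The map `A ↦ min A` on two-element subsets of a linearly ordered coarse space
is a `2`-selector. -/
theorem min_is_two_selector [LinearOrder X]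
    (𝓔 : Set (Set (X × X))) (hc : IsCoarse 𝓔)
    (hconn : CoarseConnected 𝓔) (hcomp : Compatible 𝓔) :
    ∀ E ∈ 𝓔, ∃ E' ∈ 𝓔, ∀ a b c d : X, a ≠ b → c ≠ d →
      ({a, b} : Set X) ⊆ BallSet E {c, d} →
      ({c, d} : Set X) ⊆ BallSet E {a, b} →
      (min a b, min c d) ∈ E' := by
  intro E hE
  obtain ⟨hΔ, hcompose, hinv, hsub⟩ := hc
  set G := Comp E (EInv E) with hGdef
  have hG : G ∈ 𝓔 := hcompose E hE (EInv E) (hinv E hE)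
  have hEG : ∀ x y : X, (x, y) ∈ E → (x, y) ∈ G := fun x y h => ⟨y, h, hΔ E hE y⟩
  have hGsymm : ∀ x y : X, (x, y) ∈ G → (y, x) ∈ G := by
    rintro x y ⟨z, h1, h2⟩; exact ⟨z, h2, h1⟩
  obtain ⟨F, hF, hFprop⟩ := hcomp G hG
  set H := Comp F (EInv F) with hHdef
  have hH : H ∈ 𝓔 := hcompose F hF (EInv F) (hinv F hF)
  refine ⟨Comp G H, hcompose G hG H hH, ?_⟩
  have hGE' : ∀ x y : X, (x, y) ∈ G → (x, y) ∈ Comp G H :=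
    fun x y h => ⟨y, h, y, hΔ F hF y, hΔ F hF y⟩
  have hFE' : ∀ x y : X, (x, y) ∈ F → (x, y) ∈ Comp G H :=
    fun x y h => ⟨x, ⟨x, hΔ E hE x, hΔ E hE x⟩, y, h, hΔ F hF y⟩
  have hFinvE' : ∀ x y : X, (y, x) ∈ F → (x, y) ∈ Comp G H :=
    fun x y h => ⟨x, ⟨x, hΔ E hE x, hΔ E hE x⟩, x, hΔ F hF x, h⟩
  intro a b c d hab hcd hAB hBA
  -- `min a b` is `E`-close to `c` or `d`
  have hm : (c, min a b) ∈ E ∨ (d, min a b) ∈ E := by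
    have hmem : min a b ∈ ({a, b} : Set X) := by
      rcases min_cases a b with ⟨h, _⟩ | ⟨h, _⟩ <;> simp [h]
    have := hAB hmem
    simpa [BallSet, Ball] using this
  have hm' : (a, min c d) ∈ E ∨ (b, min c d) ∈ E := by
    have hmem : min c d ∈ ({c, d} : Set X) := by
      rcases min_cases c d with ⟨h, _⟩ | ⟨h, _⟩ <;> simp [h]
    have := hBA hmem
    simpa [BallSet, Ball] using this
  -- Rewrite in terms of min/max
  have hm2 : (min c d, min a b) ∈ G ∨ (max c d, min a b) ∈ G := by
    rcases le_total c d with h | h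
    · rw [min_eq_left h, max_eq_right h]
      exact hm.imp (hEG _ _) (hEG _ _)
    · rw [min_eq_right h, max_eq_left h]
      exact hm.symm.imp (hEG _ _) (hEG _ _)
  have hm'2 : (min a b, min c d) ∈ G ∨ (max a b, min c d) ∈ G := by
    rcases le_total a b with h | h
    · rw [min_eq_left h, max_eq_right h]
      exact hm'.imp (hEG _ _) (hEG _ _)
    · rw [min_eq_right h, max_eq_left h]
      exact hm'.symm.imp (hEG _ _) (hEG _ _)
  rcases hm'2 with h1 | h1
  · exact hGE' _ _ h1
  rcases hm2 with h2 | h2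
  · exact hGE' _ _ (hGsymm _ _ h2)
  -- Hard case: (max a b, min c d) ∈ G and (max c d, min a b) ∈ G
  rcases lt_trichotomy (min a b) (min c d) with hlt | heq | hgt
  · -- use compatibility on x = min a b, y = min c d
    have hball : max c d ∈ Ball G (min a b) := hGsymm _ _ h2
    have hfF : (min a b, min c d) ∈ F := by
      by_contra hnot
      have := hFprop (min a b) (min c d) hlt hnot (max c d) hball
      exact absurd (min_le_max (a := c) (b := d)) (not_le.2 this)
    exact hFE' _ _ hfF
  · rw [heq]
    exact hGE' _ _ ⟨min c d, hΔ E hE _, hΔ E hE _⟩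
  · -- use compatibility on x = min c d, y = min a b
    have hball : max a b ∈ Ball G (min c d) := hGsymm _ _ h1
    have hfF : (min c d, min a b) ∈ F := by
      by_contra hnot
      have := hFprop (min c d) (min a b) hgt hnot (max a b) hball
      exact absurd (min_le_max (a := a) (b := b)) (not_le.2 this)
    exact hFinvE' _ _ hfF
end

section
/- Let (X, 𝓔, ≤) be a linearly ordered coarse space. Then for all a, b ∈ X with a ≤ b, the interval [a,b] := {x ∈ X : a ≤ x ≤ b} is bounded, i.e., there exist E ∈ 𝓔 and z ∈ X with [a,b] ⊆ E[z]. -/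
open Set

variable {X : Type*}

/-- In a linearly ordered coarse space, every interval `[a,b]` is bounded. -/
theorem interval_bounded_of_linearly_ordered [LinearOrder X]
    (𝓔 : Set (Set (X × X))) (hc : IsCoarse 𝓔)
    (hconn : CoarseConnected 𝓔) (hcomp : Compatible 𝓔) :
    ∀ a b : X, a ≤ b → ∃ E ∈ 𝓔, ∃ z : X, Icc a b ⊆ Ball E z := by
  intro a b _
  obtain ⟨E, hE, habE⟩ := hconn a b
  obtain ⟨F, hF, hFcomp⟩ := hcomp E hE
  refine ⟨F, hF, a, fun y hy => ?_⟩
  by_contra hyF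
  rcases eq_or_lt_of_le hy.1 with h | h
  · exact hyF (h ▸ hc.1 F hF a)
  · exact absurd (hFcomp a y h hyF b habE) (not_lt.2 hy.2)
end

section
/- Let ≤ be a linear order on a nonempty set X and define 𝓔_𝓑 := {E ⊆ X × X : Δ_X ⊆ E and E ⊆ Δ_X ∪ (B × B) for some B ∈ 𝓑_≤}. Then: (1) 𝓔_𝓑 is a coarse structure on X whose bounded subsets are exactly the members of 𝓑_≤; (2) 𝓔_𝓑 has a base of entourages all of whose balls are convex; (3) 𝓔_𝓑 ⊆ 𝓔 for every coarse structure 𝓔 on X compatible with 𝓑_≤. Hence 𝓔_𝓑 is the smallest locally convex coarse structure on X compatible with 𝓑_≤. -/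
open Set

variable {X : Type*}

lemma IB_iff {X : Type*} [LinearOrder X] [Nonempty X] (B : Set X) :
    B ∈ IB X ↔ ∃ a b : X, B ⊆ Icc a b := by
  constructor
  · rintro (rfl | h)
    · obtain ⟨a⟩ := ‹Nonempty X›
      exact ⟨a, a, by simp⟩
    · exact h
  · exact fun h => Or.inr h

/-- Example 1: the discrete coarse structure defined by the interval bornology is the
smallest locally convex coarse structure compatible with `𝓑_≤`. -/
theorem smallest_locally_convex_coarse_structure (X : Type*) [LinearOrder X] [Nonempty X] :
    let 𝓔B : Set (Set (X × X)) := {E | (∀ x : X, (x, x) ∈ E) ∧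
      ∃ B ∈ IB X, E ⊆ {p : X × X | p.1 = p.2} ∪ B ×ˢ B}
    IsCoarse 𝓔B ∧
    (∀ B : Set X, IsBoundedIn 𝓔B B ↔ B ∈ IB X) ∧
    (∃ 𝓔' ⊆ 𝓔B, (∀ E ∈ 𝓔B, ∃ E' ∈ 𝓔', E ⊆ E') ∧
      ∀ E' ∈ 𝓔', ∀ x : X, IsConvexSet (Ball E' x)) ∧
    (∀ 𝓔 : Set (Set (X × X)), IsCoarse 𝓔 →
      (∀ B : Set X, IsBoundedIn 𝓔 B ↔ B ∈ IB X) → 𝓔B ⊆ 𝓔) := by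
  intro 𝓔B
  have hmem : ∀ E : Set (X × X), E ∈ 𝓔B ↔ (∀ x : X, (x, x) ∈ E) ∧
      ∃ a b : X, E ⊆ {p : X × X | p.1 = p.2} ∪ (Icc a b) ×ˢ (Icc a b) := by
    intro E
    constructor
    · rintro ⟨hd, B, hB, hE⟩
      obtain ⟨a, b, hab⟩ := (IB_iff B).1 hB
      exact ⟨hd, a, b, hE.trans (union_subset_union_right _ (prod_mono hab hab))⟩
    · rintro ⟨hd, a, b, hE⟩
      exact ⟨hd, Icc a b, Or.inr ⟨a, b, subset_rfl⟩, hE⟩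
  refine ⟨⟨?_, ?_, ?_, ?_⟩, ?_, ?_, ?_⟩
  · exact fun E hE x => hE.1 x
  · -- composition
    intro E hE F hF
    obtain ⟨hdE, a, b, hEs⟩ := (hmem E).1 hE
    obtain ⟨hdF, c, d, hFs⟩ := (hmem F).1 hF
    refine (hmem _).2 ⟨fun x => ⟨x, hdE x, hdF x⟩, min a c, max b d, ?_⟩
    rintro ⟨x, y⟩ ⟨z, hxz, hzy⟩
    have h1 := hEs hxz
    have h2 := hFs hzy
    have hIcc : ∀ u, u ∈ Icc a b ∨ u ∈ Icc c d → u ∈ Icc (min a c) (max b d) := by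
      rintro u (⟨h1, h2⟩ | ⟨h1, h2⟩)
      · exact ⟨le_trans (min_le_left _ _) h1, h2.trans (le_max_left _ _)⟩
      · exact ⟨le_trans (min_le_right _ _) h1, h2.trans (le_max_right _ _)⟩
    rcases h1 with h1 | ⟨hx, hz⟩ <;> rcases h2 with h2 | ⟨hz', hy⟩
    · simp only [mem_setOf_eq] at h1 h2
      exact Or.inl (show x = y from h1.trans h2)
    · simp only [mem_setOf_eq] at h1
      exact Or.inr ⟨hIcc _ (Or.inr (h1 ▸ hz')), hIcc _ (Or.inr hy)⟩
    · simp only [mem_setOf_eq] at h2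
      exact Or.inr ⟨hIcc _ (Or.inl hx), hIcc _ (Or.inl (h2 ▸ hz))⟩
    · exact Or.inr ⟨hIcc _ (Or.inl hx), hIcc _ (Or.inr hy)⟩
  · -- inverse
    rintro E ⟨hd, B, hB, hE⟩
    refine ⟨fun x => hd x, B, hB, ?_⟩
    rintro ⟨x, y⟩ h
    rcases hE h with h | ⟨h1, h2⟩
    · exact Or.inl (id (Eq.symm h))
    · exact Or.inr ⟨h2, h1⟩
  · -- subsets
    rintro E ⟨hd, B, hB, hE⟩ E' hd' hsub
    exact ⟨hd', B, hB, hsub.trans hE⟩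
  · -- bounded iff IB
    intro B
    constructor
    · rintro (rfl | ⟨E, hE, x, hBx⟩)
      · exact Or.inl rfl
      · obtain ⟨hd, a, b, hEs⟩ := (hmem E).1 hE
        refine (IB_iff B).2 ⟨min a x, max b x, fun y hy => ?_⟩
        rcases hEs (hBx hy) with h | ⟨_, hy2⟩
        · simp only [mem_setOf_eq] at h
          exact h ▸ ⟨min_le_right _ _, le_max_right _ _⟩
        · exact ⟨le_trans (min_le_left _ _) hy2.1, hy2.2.trans (le_max_left _ _)⟩
    · intro hB
      rcases eq_empty_or_nonempty B with rfl | ⟨x, hx⟩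
      · exact Or.inl rfl
      · refine Or.inr ⟨{p : X × X | p.1 = p.2} ∪ B ×ˢ B, ⟨fun y => Or.inl rfl, B, hB, subset_rfl⟩,
          x, fun y hy => Or.inr ⟨hx, hy⟩⟩
  · -- base of convex balls
    refine ⟨{E | ∃ a b : X, E = {p : X × X | p.1 = p.2} ∪ (Icc a b) ×ˢ (Icc a b)}, ?_, ?_, ?_⟩
    · rintro E ⟨a, b, rfl⟩
      exact (hmem _).2 ⟨fun x => Or.inl rfl, a, b, subset_rfl⟩
    · intro E hE
      obtain ⟨hd, a, b, hEs⟩ := (hmem E).1 hE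
      exact ⟨_, ⟨a, b, rfl⟩, hEs⟩
    · rintro E ⟨a, b, rfl⟩ x
      by_cases hx : x ∈ Icc a b
      · have : Ball ({p : X × X | p.1 = p.2} ∪ (Icc a b) ×ˢ (Icc a b)) x = Icc a b := by
          ext y
          simp only [Ball, mem_union, mem_setOf_eq, mem_prod]
          constructor
          · rintro (rfl | ⟨_, h⟩)
            · exact hx
            · exact h
          · exact fun h => Or.inr ⟨hx, h⟩
        rw [this]
        rintro p ⟨hp1, _⟩ q ⟨_, hq2⟩ c hpc hcq
        exact ⟨hp1.trans hpc, hcq.trans hq2⟩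
      · have : Ball ({p : X × X | p.1 = p.2} ∪ (Icc a b) ×ˢ (Icc a b)) x = {x} := by
          ext y
          simp only [Ball, mem_union, mem_setOf_eq, mem_prod, mem_singleton_iff]
          constructor
          · rintro (rfl | ⟨h, _⟩)
            · rfl
            · exact absurd h hx
          · rintro rfl; exact Or.inl rfl
        rw [this]
        rintro p rfl q rfl c hpc hcq
        exact le_antisymm hcq hpc
  · -- minimality
    intro 𝓔 h𝓔 hbdd E hE
    obtain ⟨hd, B, hB, hEs⟩ := hE
    obtain ⟨h1, h2, h3, h4⟩ := h𝓔
    rcases (hbdd B).2 hB with rfl | ⟨F, hF, x, hBF⟩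
    · -- B empty
      obtain ⟨a⟩ := ‹Nonempty X›
      obtain ⟨F, hF, _, _⟩ := ((hbdd {a}).2 ((IB_iff _).2 ⟨a, a, by simp⟩)).resolve_left
        (by simp)
      refine h4 F hF E hd (hEs.trans ?_)
      rintro ⟨x, y⟩ h
      rcases h with h | h
      · simp only [mem_setOf_eq] at h
        exact h ▸ h1 F hF x
      · simp at h
    · refine h4 (Comp (EInv F) F) (h2 _ (h3 F hF) _ hF) E hd (hEs.trans ?_)
      rintro ⟨p, q⟩ h
      rcases h with h | ⟨hp, hq⟩
      · simp only [mem_setOf_eq] at h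
        exact ⟨p, h1 F hF p, h ▸ h1 F hF p⟩
      · exact ⟨x, hBF hp, hBF hq⟩
end

section
/- Let ≤ be a linear order on a nonempty set X, and let 𝓔 be any coarse structure on X whose bounded subsets are exactly the members of 𝓑_≤ and which has a base of entourages all of whose balls are convex. Then every E ∈ 𝓔 is contained in E_φ for some φ ∈ Φ; that is, 𝓔 ⊆ 𝓔* := {E ⊆ X × X : Δ_X ⊆ E and E ⊆ E_φ for some φ ∈ Φ}, so 𝓔* is the largest locally convex coarse structure on X compatible with 𝓑_≤. -/
open Set

variable {X : Type*}

/-- Maximality of `𝓔*`: every locally convex coarse structure compatible with the interval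
bornology is contained in `𝓔* = {E | Δ_X ⊆ E ∧ ∃ φ ∈ Φ, E ⊆ E_φ}`. -/
theorem locally_convex_compatible_le_largest (X : Type*) [LinearOrder X] [Nonempty X]
    (𝓔 : Set (Set (X × X))) (hc : IsCoarse 𝓔)
    (hbd : ∀ B : Set X, IsBoundedIn 𝓔 B ↔ B ∈ IB X)
    (𝓔' : Set (Set (X × X))) (hsub : 𝓔' ⊆ 𝓔)
    (hbase : ∀ E ∈ 𝓔, ∃ E' ∈ 𝓔', E ⊆ E')
    (hconv : ∀ E' ∈ 𝓔', ∀ x : X, IsConvexSet (Ball E' x)) :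
    (∀ E ∈ 𝓔, ∃ φ ∈ Phi X, E ⊆ EPhi φ) ∧
    𝓔 ⊆ {E : Set (X × X) | (∀ x : X, (x, x) ∈ E) ∧ ∃ φ ∈ Phi X, E ⊆ EPhi φ} := by

  obtain ⟨hdiag, hcomp, hinv, hdown⟩ := hc
  -- IB is downward closed
  have ibdown : ∀ S T : Set X, S ⊆ T → T ∈ IB X → S ∈ IB X := by
    rintro S T hST (h | ⟨a, b, hab⟩)
    · left; rw [h] at hST; exact Set.subset_eq_empty hST rfl
    · exact Or.inr ⟨a, b, hST.trans hab⟩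
  have aux : ∀ F ∈ 𝓔, ∀ a b : X, (⋃ x ∈ Icc a b, Ball F x) ∈ IB X := by
    intro F hF a b
    have hIcc : IsBoundedIn 𝓔 (Icc a b) := (hbd _).mpr (Or.inr ⟨a, b, subset_rfl⟩)
    rcases hIcc with h | ⟨G, hG, z, hz⟩
    · left
      simp [h]
    · rw [← hbd]
      refine Or.inr ⟨Comp G F, hcomp G hG F hF, z, ?_⟩
      intro y hy
      simp only [mem_iUnion] at hy
      obtain ⟨x, hx, hyx⟩ := hy
      exact ⟨x, hz hx, hyx⟩
  have key : ∀ E ∈ 𝓔, ∃ φ ∈ Phi X, E ⊆ EPhi φ := by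
    intro E hE
    obtain ⟨E', hE'base, hEE'⟩ := hbase E hE
    have hE'mem : E' ∈ 𝓔 := hsub hE'base
    have hE'inv : EInv E' ∈ 𝓔 := hinv E' hE'mem
    refine ⟨fun x => Ball E' x, ⟨?_, ?_, ?_⟩, ?_⟩
    · intro x
      refine ⟨hconv E' hE'base x, ?_⟩
      have hb : IsBoundedIn 𝓔 (Ball E' x) := Or.inr ⟨E', hE'mem, x, subset_rfl⟩
      rcases (hbd _).mp hb with h | ⟨a, b, hab⟩
      · exact ⟨x, x, by simp only []; rw [h]; exact empty_subset _⟩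
      · exact ⟨a, b, hab⟩
    · intro x
      exact hdiag E' hE'mem x
    · intro a b
      constructor
      · exact aux E' hE'mem a b
      · refine ibdown _ (⋃ y ∈ Icc a b, Ball (EInv E') y) ?_ (aux _ hE'inv a b)
        rintro x ⟨y, hy1, hy2⟩
        simp only [mem_iUnion]
        exact ⟨y, hy2, hy1⟩
    · intro p hp
      exact hEE' hp
  exact ⟨key, fun E hE => ⟨hdiag E hE, key E hE⟩⟩
end

section
/- Let X := ⋃_{n ≥ 2} (2ⁿ − 1, 2ⁿ + 1) ⊆ ℝ with the linear order inherited from ℝ, let E₀ := {(x,y) ∈ X × X : |x − y| < 2}, Eₙ := {(x,y) ∈ X × X : x, y ∈ (3, 2^{n+1})} for n ≥ 2, and 𝓔 := {E ⊆ X × X : Δ_X ⊆ E and E ⊆ Eₙ ∪ E₀ for some n ≥ 2}. Then 𝓔 is a coarse structure on X with base {Eₙ ∪ E₀ : n ≥ 2}, every ball (Eₙ ∪ E₀)[x] is convex in (X, ≤), and the order ≤ is compatible with 𝓔. -/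
open Set

variable {X : Type*}

/-- The set `X = ⋃_{n ≥ 2} (2ⁿ − 1, 2ⁿ + 1) ⊆ ℝ` of Example 3. -/
def Xset : Set ℝ := ⋃ n ∈ {n : ℕ | 2 ≤ n}, Ioo ((2 : ℝ) ^ n - 1) ((2 : ℝ) ^ n + 1)

/-- The entourage `E₀ = {(x,y) : |x − y| < 2}` of Example 3. -/
def E₀ : Set (Xset × Xset) := {p | |(p.1 : ℝ) - (p.2 : ℝ)| < 2}

/-- The entourages `Eₙ = {(x,y) : x, y ∈ (3, 2^{n+1})}` of Example 3. -/
def Eexa (n : ℕ) : Set (Xset × Xset) :=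
  {p | (p.1 : ℝ) ∈ Ioo (3 : ℝ) ((2 : ℝ) ^ (n + 1)) ∧ (p.2 : ℝ) ∈ Ioo (3 : ℝ) ((2 : ℝ) ^ (n + 1))}

/-- The coarse structure of Example 3, generated by `{Eₙ ∪ E₀ : n ≥ 2}`. -/
def Eexample : Set (Set (Xset × Xset)) :=
  {E | (∀ x : Xset, (x, x) ∈ E) ∧ ∃ n : ℕ, 2 ≤ n ∧ E ⊆ Eexa n ∪ E₀}

lemma two_pow_ge4 {k : ℕ} (hk : 2 ≤ k) : (4:ℝ) ≤ 2 ^ k := by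
  calc (4:ℝ) = 2 ^ 2 := by norm_num
  _ ≤ 2 ^ k := pow_le_pow_right₀ one_le_two hk

lemma mem_Xset' {x : ℝ} (hx : x ∈ Xset) :
    ∃ k, 2 ≤ k ∧ x ∈ Ioo ((2:ℝ) ^ k - 1) ((2:ℝ) ^ k + 1) := by
  simp only [Xset, mem_iUnion, mem_setOf_eq] at hx
  obtain ⟨k, hk, h⟩ := hx
  exact ⟨k, hk, h⟩

lemma Xset_gt3 {x : ℝ} (hx : x ∈ Xset) : 3 < x := by
  obtain ⟨k, hk, h1, _⟩ := mem_Xset' hx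
  have := two_pow_ge4 hk
  linarith

lemma same_comp {k : ℕ} (hk : 2 ≤ k) {x y : ℝ}
    (hx : x ∈ Ioo ((2:ℝ) ^ k - 1) ((2:ℝ) ^ k + 1)) (hy : y ∈ Xset)
    (hxy : |x - y| < 2) : y ∈ Ioo ((2:ℝ) ^ k - 1) ((2:ℝ) ^ k + 1) := by
  obtain ⟨m, hm, hy1, hy2⟩ := mem_Xset' hy
  have habs := abs_lt.mp hxy
  rcases lt_trichotomy m k with h | h | h
  · exfalso
    have h1 : (2:ℝ) ^ (m+1) ≤ 2 ^ k := pow_le_pow_right₀ one_le_two h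
    have h2 : (2:ℝ) ^ (m+1) = 2 ^ m * 2 := pow_succ 2 m
    have h4 : (4:ℝ) ≤ 2 ^ m := two_pow_ge4 hm
    have hx1 := hx.1
    linarith
  · subst h; exact ⟨hy1, hy2⟩
  · exfalso
    have h1 : (2:ℝ) ^ (k+1) ≤ 2 ^ m := pow_le_pow_right₀ one_le_two h
    have h2 : (2:ℝ) ^ (k+1) = 2 ^ k * 2 := pow_succ 2 k
    have h4 : (4:ℝ) ≤ 2 ^ k := two_pow_ge4 hk
    have hx2 := hx.2
    linarith

lemma comp_close {k : ℕ} {x y : ℝ}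
    (hx : x ∈ Ioo ((2:ℝ) ^ k - 1) ((2:ℝ) ^ k + 1))
    (hy : y ∈ Ioo ((2:ℝ) ^ k - 1) ((2:ℝ) ^ k + 1)) : |x - y| < 2 := by
  rw [abs_lt]
  constructor <;> [linarith [hx.1, hy.2]; linarith [hx.2, hy.1]]

lemma one_le_two_pow' (n : ℕ) : (1:ℝ) ≤ 2 ^ n := one_le_pow₀ one_le_two

lemma comp_bound {k n : ℕ} {z : ℝ} (hz1 : (2:ℝ) ^ k - 1 < z) (hz2 : z < (2:ℝ) ^ (n+1)) :
    (2:ℝ) ^ k + 1 ≤ (2:ℝ) ^ (n+2) := by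
  have hp : (2:ℝ) ^ (n+2) = 2 ^ (n+1) * 2 := pow_succ 2 (n+1)
  have h1 : (1:ℝ) ≤ 2 ^ (n+1) := one_le_two_pow' (n+1)
  rcases le_or_gt k (n+1) with h | h
  · have : (2:ℝ) ^ k ≤ 2 ^ (n+1) := pow_le_pow_right₀ one_le_two h
    linarith
  · have : (2:ℝ) ^ (n+2) ≤ 2 ^ k := pow_le_pow_right₀ one_le_two h
    linarith

/-- Example 3, first part: `𝓔` is a coarse structure with base `{Eₙ ∪ E₀ : n ≥ 2}`, all balls
of the base entourages are convex, and the order inherited from `ℝ` is compatible with `𝓔`. -/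
theorem example_three_locally_convex :
    IsCoarse Eexample ∧
    (∀ n : ℕ, 2 ≤ n → Eexa n ∪ E₀ ∈ Eexample) ∧
    (∀ E ∈ Eexample, ∃ n : ℕ, 2 ≤ n ∧ E ⊆ Eexa n ∪ E₀) ∧
    (∀ n : ℕ, 2 ≤ n → ∀ x : Xset, IsConvexSet (Ball (Eexa n ∪ E₀) x)) ∧
    Compatible Eexample := by
  have hdiagE₀ : ∀ x : Xset, (x, x) ∈ E₀ := by
    intro x; simp only [E₀, mem_setOf_eq, sub_self, abs_zero]; norm_num
  have hsymm : ∀ n : ℕ, ∀ p : Xset × Xset, p ∈ Eexa n ∪ E₀ → (p.2, p.1) ∈ Eexa n ∪ E₀ := by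
    rintro n ⟨x, y⟩ (h | h)
    · exact Or.inl ⟨h.2, h.1⟩
    · exact Or.inr (by simpa only [E₀, mem_setOf_eq, abs_sub_comm] using h)
  refine ⟨⟨fun E hE => hE.1, ?_, ?_, ?_⟩, ?_, fun E hE => hE.2, ?_, ?_⟩
  · -- composition
    rintro E ⟨hEd, n, hn, hEs⟩ F ⟨hFd, m, hm, hFs⟩
    refine ⟨fun x => ⟨x, hEd x, hFd x⟩, max n m + 1, le_trans hn (by omega), ?_⟩
    rintro ⟨x, y⟩ ⟨z, hxz, hzy⟩
    have hmono : ∀ j : ℕ, j ≤ max n m + 2 → (2:ℝ) ^ j ≤ 2 ^ (max n m + 2) :=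
      fun j hj => pow_le_pow_right₀ one_le_two hj
    rcases hEs hxz with h1 | h1 <;> rcases hFs hzy with h2 | h2
    · exact Or.inl ⟨⟨h1.1.1, lt_of_lt_of_le h1.1.2 (hmono (n+1) (by omega))⟩,
        ⟨h2.2.1, lt_of_lt_of_le h2.2.2 (hmono (m+1) (by omega))⟩⟩
    · -- (x,z) ∈ Eexa n, (z,y) ∈ E₀
      obtain ⟨k, hk, hzc⟩ := mem_Xset' z.2
      have hyc := same_comp hk hzc y.2 h2
      have hb : (2:ℝ) ^ k + 1 ≤ 2 ^ (n+2) := comp_bound hzc.1 h1.2.2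
      refine Or.inl ⟨⟨h1.1.1, lt_of_lt_of_le h1.1.2 (hmono (n+1) (by omega))⟩,
        ⟨Xset_gt3 y.2, lt_of_lt_of_le (lt_of_lt_of_le hyc.2 hb) (hmono (n+2) (by omega))⟩⟩
    · -- (x,z) ∈ E₀, (z,y) ∈ Eexa m
      obtain ⟨k, hk, hzc⟩ := mem_Xset' z.2
      have hxc := same_comp hk hzc x.2 (by simpa only [E₀, mem_setOf_eq, abs_sub_comm] using h1)
      have hb : (2:ℝ) ^ k + 1 ≤ 2 ^ (m+2) := comp_bound hzc.1 h2.1.2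
      refine Or.inl ⟨⟨Xset_gt3 x.2, lt_of_lt_of_le (lt_of_lt_of_le hxc.2 hb) (hmono (m+2) (by omega))⟩,
        ⟨h2.2.1, lt_of_lt_of_le h2.2.2 (hmono (m+1) (by omega))⟩⟩
    · -- both E₀
      obtain ⟨k, hk, hxc⟩ := mem_Xset' x.2
      have hzc := same_comp hk hxc z.2 h1
      have hyc := same_comp hk hzc y.2 h2
      exact Or.inr (comp_close hxc hyc)
  · -- inverse
    rintro E ⟨hEd, n, hn, hEs⟩
    exact ⟨hEd, n, hn, fun p hp => hsymm n _ (hEs hp)⟩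
  · -- subsets
    rintro E ⟨hEd, n, hn, hEs⟩ E' hE'd hE'E
    exact ⟨hE'd, n, hn, hE'E.trans hEs⟩
  · -- base entourages are in the family
    intro n hn
    exact ⟨fun x => Or.inr (hdiagE₀ x), n, hn, le_refl _⟩
  · -- convexity of balls
    intro n hn x a ha b hb c hac hcb
    have hac' : (a:ℝ) ≤ c := hac
    have hcb' : (c:ℝ) ≤ b := hcb
    rcases ha with ha | ha <;> rcases hb with hb | hb
    · exact Or.inl ⟨ha.1, ⟨lt_of_lt_of_le ha.2.1 hac', lt_of_le_of_lt hcb' hb.2.2⟩⟩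
    · -- a : Eexa, b : E₀
      obtain ⟨hb1, hb2⟩ := abs_lt.mp (show |(x:ℝ) - (b:ℝ)| < 2 from hb)
      rcases le_or_gt (c:ℝ) x with h | h
      · exact Or.inl ⟨ha.1, ⟨lt_of_lt_of_le ha.2.1 hac', lt_of_le_of_lt h ha.1.2⟩⟩
      · exact Or.inr (show |(x:ℝ) - (c:ℝ)| < 2 from abs_lt.mpr ⟨by linarith, by linarith⟩)
    · -- a : E₀, b : Eexa
      obtain ⟨ha1, ha2⟩ := abs_lt.mp (show |(x:ℝ) - (a:ℝ)| < 2 from ha)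
      rcases le_or_gt (x:ℝ) c with h | h
      · exact Or.inl ⟨hb.1, ⟨lt_of_lt_of_le hb.1.1 h, lt_of_le_of_lt hcb' hb.2.2⟩⟩
      · exact Or.inr (show |(x:ℝ) - (c:ℝ)| < 2 from abs_lt.mpr ⟨by linarith, by linarith⟩)
    · -- both E₀
      obtain ⟨ha1, ha2⟩ := abs_lt.mp (show |(x:ℝ) - (a:ℝ)| < 2 from ha)
      obtain ⟨hb1, hb2⟩ := abs_lt.mp (show |(x:ℝ) - (b:ℝ)| < 2 from hb)
      exact Or.inr (show |(x:ℝ) - (c:ℝ)| < 2 from abs_lt.mpr ⟨by linarith, by linarith⟩)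
  · -- compatibility
    rintro E ⟨hEd, n, hn, hEs⟩
    refine ⟨Eexa (n+1) ∪ E₀, ⟨fun x => Or.inr (hdiagE₀ x), n+1, by omega, le_refl _⟩, ?_⟩
    intro x y hxy hyF x' hx'
    have hxy' : (x:ℝ) < y := hxy
    rcases hEs hx' with h | h
    · -- (x,x') ∈ Eexa n
      have hyE : (x, y) ∉ Eexa (n+1) := fun hc => hyF (Or.inl hc)
      have hx2 : (x:ℝ) < 2 ^ (n+2) := by
        have : (2:ℝ) ^ (n+1) ≤ 2 ^ (n+2) := pow_le_pow_right₀ one_le_two (by omega)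
        exact lt_of_lt_of_le h.1.2 this
      have hy2 : ¬ ((y:ℝ) ∈ Ioo (3:ℝ) ((2:ℝ) ^ (n+2))) := by
        intro hc; exact hyE ⟨⟨h.1.1, hx2⟩, hc⟩
      have hy3 : (3:ℝ) < y := Xset_gt3 y.2
      have hyge : (2:ℝ) ^ (n+2) ≤ y := by
        by_contra hcon; push_neg at hcon; exact hy2 ⟨hy3, hcon⟩
      show (x':ℝ) < y
      exact lt_of_lt_of_le (lt_of_lt_of_le h.2.2
        (pow_le_pow_right₀ one_le_two (by omega : n+1 ≤ n+2))) hyge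
    · -- (x,x') ∈ E₀
      obtain ⟨k, hk, hxc⟩ := mem_Xset' x.2
      have hx'c := same_comp hk hxc x'.2 h
      obtain ⟨m, hm, hyc⟩ := mem_Xset' y.2
      have hyE0 : (x, y) ∉ E₀ := fun hc => hyF (Or.inr hc)
      have hmk : m ≠ k := by
        intro hmk; subst hmk; exact hyE0 (comp_close hxc hyc)
      show (x':ℝ) < y
      rcases lt_or_gt_of_ne hmk with hlt | hgt
      · exfalso
        have h1 : (2:ℝ) ^ (m+1) ≤ 2 ^ k := pow_le_pow_right₀ one_le_two hlt
        have h2 : (2:ℝ) ^ (m+1) = 2 ^ m * 2 := pow_succ 2 m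
        have h4 : (4:ℝ) ≤ 2 ^ m := two_pow_ge4 hm
        have := hxc.1
        have := hyc.2
        linarith
      · have h1 : (2:ℝ) ^ (k+1) ≤ 2 ^ m := pow_le_pow_right₀ one_le_two hgt
        have h2 : (2:ℝ) ^ (k+1) = 2 ^ k * 2 := pow_succ 2 k
        have h4 : (4:ℝ) ≤ 2 ^ k := two_pow_ge4 hk
        have := hx'c.2
        have := hyc.1
        linarith
end

section
/- Let X := ⋃_{n ≥ 2} (2ⁿ − 1, 2ⁿ + 1) ⊆ ℝ with the linear order inherited from ℝ, let E₀ := {(x,y) ∈ X × X : |x − y| < 2}, Eₙ := {(x,y) ∈ X × X : x, y ∈ (3, 2^{n+1})} for n ≥ 2, and 𝓔 := {E ⊆ X × X : Δ_X ⊆ E and E ⊆ Eₙ ∪ E₀ for some n ≥ 2}. If H ⊆ X × X satisfies E₀ ⊆ H and for every x ∈ X there exist a, b ∈ X with H[x] = {y ∈ X : a ≤ y ≤ b}, then H ∉ 𝓔. Consequently, 𝓔 has no base consisting of entourages all of whose balls are intervals [a,b] with endpoints in X. -/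
open Set

variable {X : Type*}

lemma mem_Xset {r : ℝ} {m : ℕ} (hm : 2 ≤ m)
    (h : r ∈ Ioo ((2 : ℝ) ^ m - 1) ((2 : ℝ) ^ m + 1)) : r ∈ Xset := by
  simp only [Xset, mem_iUnion, mem_setOf_eq]
  exact ⟨m, hm, h⟩

lemma example_three_part1 : ∀ H : Set (Xset × Xset), E₀ ⊆ H →
    (∀ x : Xset, ∃ a b : Xset, Ball H x = Icc a b) → H ∉ Eexample := by
  intro H hE0 hball hmem
  obtain ⟨hdiag, n, hn, hsub⟩ := hmem
  set m := n + 1 with hmdef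
  have hm3 : 3 ≤ m := by omega
  have hx8 : (8 : ℝ) ≤ 2 ^ m := by
    calc (8 : ℝ) = 2 ^ 3 := by norm_num
    _ ≤ 2 ^ m := by
        apply pow_le_pow_right₀ (by norm_num) hm3
  have hxmem : (2 : ℝ) ^ m ∈ Xset := mem_Xset (m := m) (by omega) ⟨by linarith, by linarith⟩
  set x : Xset := ⟨(2 : ℝ) ^ m, hxmem⟩ with hxdef
  obtain ⟨a, b, hab⟩ := hball x
  have hxball : x ∈ Ball H x := hE0 (by simp [E₀])
  rw [hab, mem_Icc] at hxball
  obtain ⟨hax, hxb⟩ := hxball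
  have hxb' : (2 : ℝ) ^ m ≤ (b : ℝ) := hxb
  have hbball : b ∈ Ball H x := by
    rw [hab, mem_Icc]; exact ⟨le_trans hax hxb, le_refl b⟩
  have hbE : ((x, b) : Xset × Xset) ∈ Eexa n ∪ E₀ := hsub hbball
  have hb2 : (b : ℝ) < 2 ^ m + 2 := by
    rcases hbE with h | h
    · exact absurd h.1.2 (by simp [hxdef, hmdef])
    · have h' : |((x : ℝ)) - ((b : ℝ))| < 2 := h
      have := abs_lt.mp h'
      simp only [hxdef] at this
      linarith [this.1]
  -- b < 2^m + 1
  have hb1 : (b : ℝ) < 2 ^ m + 1 := by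
    have hbX := b.2
    simp only [Xset, mem_iUnion, mem_setOf_eq, mem_Ioo] at hbX
    obtain ⟨k, hk2, hbk1, hbk2⟩ := hbX
    by_cases hkm : k ≤ m
    · have : (2 : ℝ) ^ k ≤ 2 ^ m := pow_le_pow_right₀ (by norm_num) hkm
      linarith
    · have hk : m + 1 ≤ k := by omega
      have : (2 : ℝ) ^ (m + 1) ≤ 2 ^ k := pow_le_pow_right₀ (by norm_num) hk
      have h2 : (2 : ℝ) ^ (m + 1) = 2 * 2 ^ m := by ring
      linarith
  set yr : ℝ := ((b : ℝ) + 2 ^ m + 1) / 2 with hyr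
  have hymem : yr ∈ Xset := mem_Xset (m := m) (show 2 ≤ m by omega) ⟨by simp [hyr]; linarith, by simp [hyr]; linarith⟩
  set y : Xset := ⟨yr, hymem⟩ with hydef
  have hyball : y ∈ Ball H x := hE0 (by
    show |(x : ℝ) - (y : ℝ)| < 2
    simp only [hxdef, hydef]
    rw [abs_lt]
    constructor <;> simp [hyr] <;> linarith)
  rw [hab, mem_Icc] at hyball
  have : yr ≤ (b : ℝ) := hyball.2
  simp only [hyr] at this
  linarith

/-- Example 3, second part: no entourage of `𝓔` containing `E₀` has all balls equal to
intervals `[a,b]` with endpoints in `X`; hence `𝓔` has no interval base. -/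
theorem example_three_no_interval_base :
    (∀ H : Set (Xset × Xset), E₀ ⊆ H →
      (∀ x : Xset, ∃ a b : Xset, Ball H x = Icc a b) → H ∉ Eexample) ∧
    ¬ ∃ 𝓔' ⊆ Eexample, (∀ E ∈ Eexample, ∃ E' ∈ 𝓔', E ⊆ E') ∧
        ∀ E' ∈ 𝓔', ∀ x : Xset, ∃ a b : Xset, Ball E' x = Icc a b := by
  refine ⟨example_three_part1, ?_⟩
  rintro ⟨E', hsubE, hbase, hballs⟩
  have hmem : Eexa 2 ∪ E₀ ∈ Eexample :=
    ⟨fun x => Or.inr (by simp [E₀]), 2, le_refl 2, subset_rfl⟩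
  obtain ⟨F, hF, hFsub⟩ := hbase _ hmem
  exact example_three_part1 F (subset_union_right.trans hFsub) (hballs F hF) (hsubE hF)
end

section
/- Let (X, ≤) be a linearly ordered set and let E ⊆ X × X contain the diagonal Δ_X and have all balls E[x] convex. Then for every n ≥ 1 and every x ∈ X, the ball Eⁿ[x] of the n-fold composition Eⁿ is convex. -/
open Set

variable {X : Type*}

/-- If all balls of `E` are convex (and `E` contains the diagonal), then all balls of the
`n`-fold compositions `Eⁿ` (`n ≥ 1`) are convex. -/
theorem compPow_ball_convex [LinearOrder X] (E : Set (X × X))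
    (hdiag : ∀ x : X, (x, x) ∈ E)
    (hconv : ∀ x : X, IsConvexSet (Ball E x)) :
    ∀ n : ℕ, 1 ≤ n → ∀ x : X, IsConvexSet (Ball (compPow E n) x) := by
  have key : ∀ n : ℕ, (∀ x, (x, x) ∈ compPow E n) ∧
      ∀ x, IsConvexSet (Ball (compPow E n) x) := by
    intro n
    induction n with
    | zero => exact ⟨hdiag, hconv⟩
    | succ n ih =>
      cases n with
      | zero => exact ⟨hdiag, hconv⟩
      | succ m =>
        obtain ⟨ihd, ihc⟩ := ih
        constructor
        · intro x
          exact ⟨x, hdiag x, ihd x⟩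
        · intro x a ha b hb c hac hcb
          obtain ⟨za, hza, hfa⟩ := ha
          obtain ⟨zb, hzb, hfb⟩ := hb
          rcases lt_or_ge c za with h1 | h1
          · exact ⟨za, hza, ihc za a hfa za (ihd za) c hac h1.le⟩
          · rcases le_or_gt c zb with h2 | h2
            · exact ⟨c, hconv x za hza zb hzb c h1 h2, ihd c⟩
            · exact ⟨zb, hzb, ihc zb zb (ihd zb) b hfb c h2.le hcb⟩
  intro n _ x
  exact (key n).2 x
end

section
/- Let (X, ≤) be a linearly ordered set and let E ⊆ X × X satisfy Δ_X ⊆ E, E = E⁻¹, and E[x] convex for every x ∈ X. Fix x ∈ X and for n ≥ 1 set Rₙ := (E^{n+1}[x] \ Eⁿ[x]) ∩ {y ∈ X : x ≤ y} and Lₙ := (E^{n+1}[x] \ Eⁿ[x]) ∩ {y ∈ X : y < x}. Then: each Rₙ and each Lₙ is convex; E[Rᵢ] ∩ Lⱼ = ∅ for all i, j ≥ 1; and E[Rᵢ] ∩ Rⱼ = ∅ and E[Lᵢ] ∩ Lⱼ = ∅ whenever |i − j| > 1. -/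
open Set

variable {X : Type*}

lemma compPow_diag (E : Set (X × X)) (hdiag : ∀ x : X, (x, x) ∈ E) :
    ∀ n (y : X), (y, y) ∈ compPow E n := by
  intro n
  induction n with
  | zero => exact hdiag
  | succ m ih =>
    intro y
    match m, ih with
    | 0, _ => exact hdiag y
    | k + 1, ih => exact ⟨y, hdiag y, ih y⟩

lemma compPow_succ_subset (E : Set (X × X)) (hdiag : ∀ x : X, (x, x) ∈ E) (n : ℕ) :
    compPow E n ⊆ compPow E (n + 1) := by
  match n with
  | 0 => exact fun p hp => hp
  | m + 1 => exact fun p hp => ⟨p.1, hdiag p.1, hp⟩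

lemma compPow_mono (E : Set (X × X)) (hdiag : ∀ x : X, (x, x) ∈ E) {m n : ℕ} (h : m ≤ n) :
    compPow E m ⊆ compPow E n := by
  induction h with
  | refl => exact fun p hp => hp
  | step _ ih => exact fun p hp => compPow_succ_subset E hdiag _ (ih hp)

lemma compPow_comp_right (E : Set (X × X)) :
    ∀ n {x z y : X}, (x, z) ∈ compPow E (n + 1) → (z, y) ∈ E → (x, y) ∈ compPow E (n + 2)
  | 0, x, z, y, h1, h2 => ⟨z, h1, h2⟩
  | (n+1), x, z, y, h1, h2 => by
    obtain ⟨w, hw1, hw2⟩ := h1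
    exact ⟨w, hw1, compPow_comp_right E n hw2 h2⟩

lemma compPow_symm (E : Set (X × X)) (hsymm : E = EInv E) :
    ∀ n {x y : X}, (x, y) ∈ compPow E (n + 1) → (y, x) ∈ compPow E (n + 1)
  | 0, x, y, h => by rw [hsymm] at h; exact h
  | (n+1), x, y, h => by
    obtain ⟨z, hz1, hz2⟩ := h
    have hz1' : (z, x) ∈ E := by rw [hsymm] at hz1; exact hz1
    exact compPow_comp_right E n (compPow_symm E hsymm n hz2) hz1'

lemma ball_compPow_convex [LinearOrder X] (E : Set (X × X))
    (hdiag : ∀ x : X, (x, x) ∈ E)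
    (hconv : ∀ x : X, IsConvexSet (Ball E x)) :
    ∀ n (x : X), IsConvexSet (Ball (compPow E (n + 1)) x) := by
  intro n
  induction n with
  | zero => exact hconv
  | succ m ih =>
    intro x a ha b hb c hac hcb
    obtain ⟨z1, hz1, ha1⟩ := ha
    obtain ⟨z2, hz2, hb1⟩ := hb
    rcases le_or_gt c z1 with h | h
    · exact ⟨z1, hz1, ih z1 a ha1 z1 (compPow_diag E hdiag _ z1) c hac h⟩
    rcases le_or_gt z2 c with h2 | h2
    · exact ⟨z2, hz2, ih z2 z2 (compPow_diag E hdiag _ z2) b hb1 c h2 hcb⟩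
    · exact ⟨c, hconv x z1 hz1 z2 hz2 c h.le h2.le, compPow_diag E hdiag _ c⟩

lemma annuli_key (E : Set (X × X)) (hdiag : ∀ x : X, (x, x) ∈ E) (hsymm : E = EInv E)
    (x : X) {i j : ℕ} (hi : 1 ≤ i) (hj : 1 ≤ j) (habs : 1 < |(i : ℤ) - (j : ℤ)|)
    {a y : X} (hai : (x, a) ∈ compPow E (i + 1)) (hai' : (x, a) ∉ compPow E i)
    (hyj : (x, y) ∈ compPow E (j + 1)) (hyj' : (x, y) ∉ compPow E j)
    (hay : (a, y) ∈ E) : False := by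
  have hcases : i + 2 ≤ j ∨ j + 2 ≤ i := by
    rcases abs_cases ((i : ℤ) - (j : ℤ)) with ⟨h1, _⟩ | ⟨h1, _⟩ <;> omega
  rcases hcases with hc | hc
  · exact hyj' (compPow_mono E hdiag hc (compPow_comp_right E i hai hay))
  · have hya : (y, a) ∈ E := by rw [hsymm] at hay; exact hay
    exact hai' (compPow_mono E hdiag hc (compPow_comp_right E j hyj hya))

/-- Properties of the annuli `Rₙ`, `Lₙ` in the proof of Theorem 2: they are convex,
`E[Rᵢ]` misses every `Lⱼ`, and `E[Rᵢ] ∩ Rⱼ = ∅`, `E[Lᵢ] ∩ Lⱼ = ∅` whenever `|i − j| > 1`. -/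
theorem annuli_properties [LinearOrder X] (E : Set (X × X))
    (hdiag : ∀ x : X, (x, x) ∈ E) (hsymm : E = EInv E)
    (hconv : ∀ x : X, IsConvexSet (Ball E x)) (x : X)
    (R L : ℕ → Set X)
    (hR : ∀ n : ℕ, R n = (Ball (compPow E (n + 1)) x \ Ball (compPow E n) x) ∩ {y : X | x ≤ y})
    (hL : ∀ n : ℕ, L n = (Ball (compPow E (n + 1)) x \ Ball (compPow E n) x) ∩ {y : X | y < x}) :
    (∀ n : ℕ, 1 ≤ n → IsConvexSet (R n) ∧ IsConvexSet (L n)) ∧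
    (∀ i : ℕ, 1 ≤ i → ∀ j : ℕ, 1 ≤ j → BallSet E (R i) ∩ L j = ∅) ∧
    (∀ i : ℕ, 1 ≤ i → ∀ j : ℕ, 1 ≤ j → 1 < |(i : ℤ) - (j : ℤ)| →
      BallSet E (R i) ∩ R j = ∅ ∧ BallSet E (L i) ∩ L j = ∅) := by
  have hball := ball_compPow_convex E hdiag hconv
  have hdiagn := compPow_diag E hdiag
  refine ⟨?_, ?_, ?_⟩
  · intro n hn
    obtain ⟨m, rfl⟩ : ∃ m, n = m + 1 := ⟨n - 1, by omega⟩
    constructor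
    · intro a ha b hb c h1 h2
      rw [hR] at ha hb ⊢
      refine ⟨⟨hball (m + 1) x a ha.1.1 b hb.1.1 c h1 h2, fun hc => ha.1.2 ?_⟩,
        le_trans ha.2 h1⟩
      exact hball m x x (hdiagn (m + 1) x) c hc a ha.2 h1
    · intro a ha b hb c h1 h2
      rw [hL] at ha hb ⊢
      refine ⟨⟨hball (m + 1) x a ha.1.1 b hb.1.1 c h1 h2, fun hc => hb.1.2 ?_⟩,
        lt_of_le_of_lt h2 hb.2⟩
      exact hball m x c hc x (hdiagn (m + 1) x) b h2 hb.2.le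
  · intro i hi j hj
    rw [Set.eq_empty_iff_forall_notMem]
    rintro y ⟨hy1, hy2⟩
    simp only [BallSet, Set.mem_iUnion] at hy1
    obtain ⟨a, ha, hya⟩ := hy1
    rw [hR] at ha
    rw [hL] at hy2
    have hyx : y < x := hy2.2
    have hxa : x ≤ a := ha.2
    -- y ∈ Ball E a, a ∈ Ball E a, y ≤ x ≤ a ⟹ x ∈ Ball E a
    have hx : x ∈ Ball E a :=
      hconv a y hya a (hdiag a) x hyx.le hxa
    have hxa' : (x, a) ∈ E := by rw [hsymm]; exact hx
    exact ha.1.2 (compPow_mono E hdiag hi hxa')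
  · intro i hi j hj habs
    constructor
    · rw [Set.eq_empty_iff_forall_notMem]
      rintro y ⟨hy1, hy2⟩
      simp only [BallSet, Set.mem_iUnion] at hy1
      obtain ⟨a, ha, hya⟩ := hy1
      rw [hR] at ha hy2
      exact annuli_key E hdiag hsymm x hi hj habs ha.1.1 ha.1.2 hy2.1.1 hy2.1.2 hya
    · rw [Set.eq_empty_iff_forall_notMem]
      rintro y ⟨hy1, hy2⟩
      simp only [BallSet, Set.mem_iUnion] at hy1
      obtain ⟨a, ha, hya⟩ := hy1
      rw [hL] at ha hy2
      exact annuli_key E hdiag hsymm x hi hj habs ha.1.1 ha.1.2 hy2.1.1 hy2.1.2 hya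
end

section
/- Let (X, ≤) be a linearly ordered set and let E ⊆ X × X satisfy Δ_X ⊆ E, E = E⁻¹, and E[x] convex for every x ∈ X. Fix x ∈ X and for n ≥ 1 set Rₙ := (E^{n+1}[x] \ Eⁿ[x]) ∩ {y ∈ X : x ≤ y}. Then R₁ ⊆ (E ∘ E)[x], and for every n ≥ 2, if y ∈ R_{n−1} and E[y] ∩ Rₙ ≠ ∅, then Rₙ ⊆ (E ∘ E)[y]. In particular, every nonempty Rₙ is contained in a ball of radius E ∘ E. -/
open Set

variable {X : Type*}

lemma subset_compPow (E : Set (X × X)) (hdiag : ∀ x : X, (x, x) ∈ E) :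
    ∀ m : ℕ, E ⊆ compPow E m := by
  intro m
  induction m with
  | zero => exact fun p hp => hp
  | succ k ih =>
    match k, ih with
    | 0, _ => exact fun p hp => hp
    | (j + 1), ih =>
      intro p hp
      exact ⟨p.1, hdiag p.1, ih hp⟩

/-- The key convexity lemma: if `(a,b) ∈ E^{m+2}` and `c` lies between `a` and `b`
(in either order), then `(a,c) ∈ E^{m+1}` or `(c,b) ∈ E`. -/
lemma compPow_between [LinearOrder X] (E : Set (X × X))
    (hdiag : ∀ x : X, (x, x) ∈ E) (hsymm : E = EInv E)
    (hconv : ∀ x : X, IsConvexSet (Ball E x)) :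
    ∀ m : ℕ, ∀ a b c : X, (a, b) ∈ compPow E (m + 2) →
      ((a ≤ c ∧ c ≤ b) ∨ (b ≤ c ∧ c ≤ a)) →
      (a, c) ∈ compPow E (m + 1) ∨ (c, b) ∈ E := by
  have hs : ∀ a b : X, (a, b) ∈ E → (b, a) ∈ E := by
    intro a b h; rw [hsymm] at h; exact h
  -- `c` between `a` and `z` (either order) and `(a,z) ∈ E` gives `(a,c) ∈ E`
  have hbtw : ∀ a z c : X, (a, z) ∈ E →
      ((a ≤ c ∧ c ≤ z) ∨ (z ≤ c ∧ c ≤ a)) → (a, c) ∈ E := by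
    intro a z c haz hc
    rcases hc with ⟨h1, h2⟩ | ⟨h1, h2⟩
    · exact hconv a a (hdiag a) z haz c h1 h2
    · exact hconv a z haz a (hdiag a) c h1 h2
  intro m
  induction m with
  | zero =>
    intro a b c hab hc
    obtain ⟨z, haz, hzb⟩ := hab
    rcases hc with ⟨h1, h2⟩ | ⟨h1, h2⟩
    · rcases le_total c z with h | h
      · exact Or.inl (hbtw a z c haz (Or.inl ⟨h1, h⟩))
      · -- c between z and b; use ball of b (symmetry)
        exact Or.inr (hs b c (hbtw b z c (hs z b hzb) (Or.inr ⟨h, h2⟩)))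
    · rcases le_total c z with h | h
      · -- b ≤ c ≤ z, so c between z and b
        exact Or.inr (hs b c (hbtw b z c (hs z b hzb) (Or.inl ⟨h1, h⟩)))
      · exact Or.inl (hbtw a z c haz (Or.inr ⟨h, h2⟩))
  | succ k ih =>
    intro a b c hab hc
    obtain ⟨z, haz, hzb⟩ := hab
    rcases hc with ⟨h1, h2⟩ | ⟨h1, h2⟩
    · rcases le_total c z with h | h
      · exact Or.inl (subset_compPow E hdiag (k + 2) (hbtw a z c haz (Or.inl ⟨h1, h⟩)))
      · rcases ih z b c hzb (Or.inl ⟨h, h2⟩) with h' | h'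
        · exact Or.inl ⟨z, haz, h'⟩
        · exact Or.inr h'
    · rcases le_total c z with h | h
      · rcases ih z b c hzb (Or.inr ⟨h1, h⟩) with h' | h'
        · exact Or.inl ⟨z, haz, h'⟩
        · exact Or.inr h'
      · exact Or.inl (subset_compPow E hdiag (k + 2) (hbtw a z c haz (Or.inr ⟨h, h2⟩)))

/-- `E²`-boundedness of the annuli `Rₙ` in the proof of Theorem 2. -/
theorem annuli_E2_bounded [LinearOrder X] (E : Set (X × X))
    (hdiag : ∀ x : X, (x, x) ∈ E) (hsymm : E = EInv E)
    (hconv : ∀ x : X, IsConvexSet (Ball E x)) (x : X)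
    (R : ℕ → Set X)
    (hR : ∀ n : ℕ, R n = (Ball (compPow E (n + 1)) x \ Ball (compPow E n) x) ∩ {y : X | x ≤ y}) :
    R 1 ⊆ Ball (Comp E E) x ∧
    (∀ n : ℕ, 2 ≤ n → ∀ y ∈ R (n - 1), (Ball E y ∩ R n).Nonempty →
      R n ⊆ Ball (Comp E E) y) ∧
    (∀ n : ℕ, 1 ≤ n → (R n).Nonempty → ∃ y : X, R n ⊆ Ball (Comp E E) y) := by
  have hs : ∀ a b : X, (a, b) ∈ E → (b, a) ∈ E := by
    intro a b h; rw [hsymm] at h; exact h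
  -- any two points of `R n` (n ≥ 1) are `E`-close
  have pairwise : ∀ n : ℕ, 1 ≤ n → ∀ w ∈ R n, ∀ w' ∈ R n, (w', w) ∈ E := by
    intro n hn w hw w' hw'
    obtain ⟨m, rfl⟩ : ∃ m, n = m + 1 := ⟨n - 1, (Nat.succ_pred_eq_of_pos hn).symm⟩
    rw [hR (m + 1)] at hw hw'
    obtain ⟨⟨hw1, hw2⟩, hwx⟩ := hw
    obtain ⟨⟨hw1', hw2'⟩, hwx'⟩ := hw'
    rcases le_total w w' with h | h
    · rcases compPow_between E hdiag hsymm hconv m x w' w hw1' (Or.inl ⟨hwx, h⟩) with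
        h' | h'
      · exact absurd h' hw2
      · exact hs w w' h'
    · rcases compPow_between E hdiag hsymm hconv m x w w' hw1 (Or.inl ⟨hwx', h⟩) with
        h' | h'
      · exact absurd h' hw2'
      · exact h'
  refine ⟨?_, ?_, ?_⟩
  · -- R 1 ⊆ (E ∘ E)[x]
    intro w hw
    rw [hR 1] at hw
    exact hw.1.1
  · -- the relative statement
    intro n hn y _ hne w hw
    obtain ⟨z, hzy, hz⟩ := hne
    exact ⟨z, hzy, pairwise n (le_trans one_le_two hn) w hw z hz⟩
  · -- nonempty annuli are `E²`-bounded
    intro n hn ⟨y, hy⟩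
    exact ⟨y, fun w hw => ⟨y, hdiag y, pairwise n hn w hw y hy⟩⟩
end

section
/- Let (X, ≤) be a linearly ordered set and let E ⊆ X × X satisfy Δ_X ⊆ E, E = E⁻¹, and E[x] convex for every x ∈ X. Fix x ∈ X and let E^ω[x] := ⋃_{n ≥ 1} Eⁿ[x]. Then there exist families 𝓜₀ and 𝓜₁ of subsets of X such that ⋃(𝓜₀ ∪ 𝓜₁) = E^ω[x]; every A ∈ 𝓜₀ ∪ 𝓜₁ satisfies A ⊆ (E ∘ E)[y_A] for some y_A ∈ X; and for each i ∈ {0,1} and all distinct A, B ∈ 𝓜ᵢ one has E[A] ∩ B = ∅. -/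
open Set

variable {X : Type*}

set_option linter.unusedSectionVars false

section CCFAux
variable [LinearOrder X] {E : Set (X × X)} {x : X}

lemma ccf_mem_symm (hsymm : E = EInv E) {a b : X} (h : (a, b) ∈ E) : (b, a) ∈ E := by
  rw [hsymm] at h; exact h

lemma ccf_refl_pow (hdiag : ∀ x : X, (x, x) ∈ E) : ∀ n (y : X), (y, y) ∈ compPow E n
  | 0, y => hdiag y
  | 1, y => hdiag y
  | (n+2), y => ⟨y, hdiag y, ccf_refl_pow hdiag (n+1) y⟩

lemma ccf_pow_mono (hdiag : ∀ x : X, (x, x) ∈ E) :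
    ∀ {m n : ℕ}, 1 ≤ m → m ≤ n → compPow E m ⊆ compPow E n := by
  intro m n hm hmn
  induction n with
  | zero => omega
  | succ k ih =>
    rcases Nat.lt_or_ge m (k+1) with h | h
    · intro p hp
      have hk := ih (by omega) hp
      obtain ⟨k', rfl⟩ : ∃ k', k = k' + 1 := ⟨k - 1, by omega⟩
      exact ⟨p.1, hdiag p.1, hk⟩
    · have : m = k + 1 := by omega
      subst this; exact subset_rfl

lemma ccf_append : ∀ (n : ℕ) {a b c : X}, (a, b) ∈ compPow E (n+1) → (b, c) ∈ E →
    (a, c) ∈ compPow E (n+2)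
  | 0, a, b, c, h1, h2 => ⟨b, h1, h2⟩
  | (n+1), a, b, c, h1, h2 => by
      obtain ⟨u, hau, hub⟩ := h1
      exact ⟨u, hau, ccf_append n hub h2⟩

lemma ccf_unappend : ∀ (n : ℕ) {a c : X}, (a, c) ∈ compPow E (n+2) →
    ∃ b, (a, b) ∈ compPow E (n+1) ∧ (b, c) ∈ E
  | 0, a, c, ⟨u, hau, huc⟩ => ⟨u, hau, huc⟩
  | (n+1), a, c, ⟨u, hau, huc⟩ =>
      let ⟨b, hub, hbc⟩ := ccf_unappend n huc
      ⟨b, ⟨u, hau, hub⟩, hbc⟩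

lemma ccf_conv_pow (hdiag : ∀ x : X, (x, x) ∈ E)
    (hconv : ∀ y : X, IsConvexSet (Ball E y)) :
    ∀ (n : ℕ) (y : X), IsConvexSet (Ball (compPow E (n+1)) y)
  | 0, y => hconv y
  | (n+1), y => by
    intro a ha b hb c hac hcb
    obtain ⟨za, h1a, h2a⟩ := ha
    obtain ⟨zb, h1b, h2b⟩ := hb
    rcases le_total c za with h | h
    · rcases le_total zb c with h' | h'
      · exact ⟨c, hconv y zb h1b za h1a c h' h, ccf_refl_pow hdiag _ c⟩
      · exact ⟨za, h1a,
          ccf_conv_pow hdiag hconv n za a h2a za (ccf_refl_pow hdiag _ za) c hac h⟩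
    · rcases le_total c zb with h' | h'
      · exact ⟨c, hconv y za h1a zb h1b c h h', ccf_refl_pow hdiag _ c⟩
      · exact ⟨zb, h1b,
          ccf_conv_pow hdiag hconv n zb zb (ccf_refl_pow hdiag _ zb) b h2b c h' hcb⟩

/-- The ball `Eⁿ[x]`. -/
def ccfB (E : Set (X × X)) (x : X) (n : ℕ) : Set X := Ball (compPow E n) x

/-- Right (`s = true`) and left (`s = false`) part of the annulus `E^{n+2}[x] ∖ E^{n+1}[x]`. -/
def ccfPiece [LinearOrder X] (E : Set (X × X)) (x : X) (s : Bool) (n : ℕ) : Set X :=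
  {y | y ∈ ccfB E x (n+2) ∧ y ∉ ccfB E x (n+1) ∧ (if s then x < y else y < x)}

lemma ccf_side (hdiag : ∀ x : X, (x, x) ∈ E) (hsymm : E = EInv E)
    (hconv : ∀ y : X, IsConvexSet (Ball E y)) {y w : X} {k : ℕ}
    (hy1 : y ∉ ccfB E x (k+1)) (hw : (y, w) ∈ E) :
    (x < y → x < w) ∧ (y < x → w < x) := by
  have hxy : (x, y) ∉ E := fun h => hy1 (ccf_pow_mono hdiag le_rfl (by omega : 1 ≤ k+1) h)
  constructor
  · intro hlt; by_contra hcon; push_neg at hcon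
    exact hxy (ccf_mem_symm hsymm (hconv y w hw y (hdiag y) x hcon hlt.le))
  · intro hlt; by_contra hcon; push_neg at hcon
    exact hxy (ccf_mem_symm hsymm (hconv y y (hdiag y) w hw x hlt.le hcon))

lemma ccf_sep_pieces (hdiag : ∀ x : X, (x, x) ∈ E) (hsymm : E = EInv E)
    (hconv : ∀ y : X, IsConvexSet (Ball E y)) {s s' : Bool} {n m : ℕ}
    (hpar : n % 2 = m % 2) (hne : s ≠ s' ∨ n ≠ m) :
    BallSet E (ccfPiece E x s n) ∩ ccfPiece E x s' m = ∅ := by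
  rw [eq_empty_iff_forall_notMem]
  rintro w ⟨hw1, hw2⟩
  simp only [BallSet, mem_iUnion, exists_prop] at hw1
  obtain ⟨y, hy, hyw⟩ := hw1
  obtain ⟨hy2, hy1, hys⟩ := hy
  obtain ⟨hw2', hw1', hws⟩ := hw2
  have hside := ccf_side (x := x) hdiag hsymm hconv hy1 hyw
  by_cases hss : s = s'
  · have hnm : n ≠ m := by tauto
    rcases (by omega : m ≥ n + 2 ∨ n ≥ m + 2) with h | h
    · exact hw1' (ccf_pow_mono hdiag (by omega : 1 ≤ n+3) (by omega : n+3 ≤ m+1)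
        (ccf_append (n+1) hy2 hyw))
    · obtain ⟨n', rfl⟩ : ∃ n', n = n' + 2 := ⟨n - 2, by omega⟩
      have hwn : (x, w) ∈ compPow E (n' + 2) :=
        ccf_pow_mono hdiag (by omega : 1 ≤ m+2) (by omega) hw2'
      exact hy1 (ccf_append (n'+1) hwn (ccf_mem_symm hsymm hyw))
  · cases s <;> cases s'
    · exact absurd rfl hss
    · rw [if_neg (by simp : ¬ (false = true))] at hys
      rw [if_pos rfl] at hws
      exact lt_asymm hws (hside.2 hys)
    · rw [if_pos rfl] at hys
      rw [if_neg (by simp : ¬ (false = true))] at hws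
      exact lt_asymm hws (hside.1 hys)
    · exact absurd rfl hss

lemma ccf_sep_ball_piece (hdiag : ∀ x : X, (x, x) ∈ E) {s : Bool} {m : ℕ} (hm : 1 ≤ m) :
    BallSet E (Ball E x) ∩ ccfPiece E x s m = ∅ := by
  rw [eq_empty_iff_forall_notMem]
  rintro w ⟨hw1, hw2⟩
  simp only [BallSet, mem_iUnion, exists_prop] at hw1
  obtain ⟨y, hy, hyw⟩ := hw1
  obtain ⟨_, hw1', _⟩ := hw2
  exact hw1' (ccf_pow_mono hdiag (by omega : 1 ≤ 2) (by omega : 2 ≤ m+1)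
    (ccf_append 0 hy hyw))

lemma ccf_sep_piece_ball (hdiag : ∀ x : X, (x, x) ∈ E) (hsymm : E = EInv E)
    {s : Bool} {m : ℕ} (hm : 1 ≤ m) :
    BallSet E (ccfPiece E x s m) ∩ Ball E x = ∅ := by
  rw [eq_empty_iff_forall_notMem]
  rintro w ⟨hw1, hw2⟩
  simp only [BallSet, mem_iUnion, exists_prop] at hw1
  obtain ⟨y, hy, hyw⟩ := hw1
  obtain ⟨n', rfl⟩ : ∃ n', m = n' + 1 := ⟨m - 1, by omega⟩
  obtain ⟨_, hy1, _⟩ := hy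
  have hwm : (x, w) ∈ compPow E (n' + 1) :=
    ccf_pow_mono hdiag le_rfl (by omega : 1 ≤ n'+1) hw2
  exact hy1 (ccf_append n' hwm (ccf_mem_symm hsymm hyw))

lemma ccf_bnd_le (hdiag : ∀ x : X, (x, x) ∈ E) (hsymm : E = EInv E)
    (hconv : ∀ y : X, IsConvexSet (Ball E y)) {s : Bool} {n : ℕ} {u v : X}
    (hu : u ∈ ccfPiece E x s n) (hv : v ∈ ccfPiece E x s n) (huv : u ≤ v) :
    (u, v) ∈ Comp E E := by
  obtain ⟨hu2, hu1, hus⟩ := hu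
  obtain ⟨hv2, hv1, hvs⟩ := hv
  cases s
  · simp only [if_neg Bool.false_ne_true, Bool.false_eq_true, if_false] at hus hvs
    obtain ⟨z, hz, hzu⟩ := ccf_unappend n hu2
    have hvz : v ≤ z := by
      by_contra h; push_neg at h
      exact hv1 (ccf_conv_pow hdiag hconv n x z hz x (ccf_refl_pow hdiag _ x) v h.le hvs.le)
    have hzv : (z, v) ∈ E := hconv z u hzu z (hdiag z) v huv hvz
    exact ⟨z, ccf_mem_symm hsymm hzu, hzv⟩
  · simp only [if_pos] at hus hvs
    obtain ⟨z, hz, hzv⟩ := ccf_unappend n hv2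
    have hzu : z ≤ u := by
      by_contra h; push_neg at h
      exact hu1 (ccf_conv_pow hdiag hconv n x x (ccf_refl_pow hdiag _ x) z hz u hus.le h.le)
    have hzu' : (z, u) ∈ E := hconv z z (hdiag z) v hzv u hzu huv
    exact ⟨z, ccf_mem_symm hsymm hzu', hzv⟩

lemma ccf_compEE_symm (hsymm : E = EInv E) {a b : X} (h : (a, b) ∈ Comp E E) :
    (b, a) ∈ Comp E E := by
  obtain ⟨z, h1, h2⟩ := h
  exact ⟨z, ccf_mem_symm hsymm h2, ccf_mem_symm hsymm h1⟩

lemma ccf_piece_bounded (hdiag : ∀ x : X, (x, x) ∈ E) (hsymm : E = EInv E)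
    (hconv : ∀ y : X, IsConvexSet (Ball E y)) (s : Bool) (n : ℕ) :
    ∃ y : X, ccfPiece E x s n ⊆ Ball (Comp E E) y := by
  rcases eq_empty_or_nonempty (ccfPiece E x s n) with h | ⟨y0, hy0⟩
  · exact ⟨x, by rw [h]; exact empty_subset _⟩
  · refine ⟨y0, fun v hv => ?_⟩
    rcases le_total y0 v with h | h
    · exact ccf_bnd_le hdiag hsymm hconv hy0 hv h
    · exact ccf_compEE_symm hsymm (ccf_bnd_le hdiag hsymm hconv hv hy0 h)

end CCFAux

/-- The key step of Theorem 2: the component `E^ω[x]` admits an `E²`-bounded cover that splits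
into two `E`-disjoint families. -/
theorem component_cover_two_families [LinearOrder X] (E : Set (X × X))
    (hdiag : ∀ x : X, (x, x) ∈ E) (hsymm : E = EInv E)
    (hconv : ∀ x : X, IsConvexSet (Ball E x)) (x : X) :
    ∃ M0 M1 : Set (Set X),
      ⋃₀ (M0 ∪ M1) = ⋃ n ∈ {n : ℕ | 1 ≤ n}, Ball (compPow E n) x ∧
      (∀ A ∈ M0 ∪ M1, ∃ y : X, A ⊆ Ball (Comp E E) y) ∧
      (∀ A ∈ M0, ∀ B ∈ M0, A ≠ B → BallSet E A ∩ B = ∅) ∧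
      (∀ A ∈ M1, ∀ B ∈ M1, A ≠ B → BallSet E A ∩ B = ∅) := by
  classical
  refine ⟨{A | ∃ n, n % 2 = 0 ∧ (A = ccfPiece E x true n ∨ A = ccfPiece E x false n)},
    insert (Ball E x)
      {A | ∃ n, n % 2 = 1 ∧ (A = ccfPiece E x true n ∨ A = ccfPiece E x false n)},
    ?_, ?_, ?_, ?_⟩
  · ext w
    simp only [mem_sUnion, mem_union, mem_iUnion, mem_setOf_eq, exists_prop]
    constructor
    · rintro ⟨A, hA, hwA⟩
      rcases hA with ⟨n, -, hA'⟩ | hA'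
      · rcases hA' with rfl | rfl <;>
          exact ⟨n + 2, by omega, hwA.1⟩
      · rcases hA' with rfl | ⟨n, -, hA''⟩
        · exact ⟨1, le_rfl, hwA⟩
        · rcases hA'' with rfl | rfl <;>
            exact ⟨n + 2, by omega, hwA.1⟩
    · rintro ⟨n, hn1, hwn⟩
      have hex : ∃ k, 1 ≤ k ∧ w ∈ ccfB E x k := ⟨n, hn1, hwn⟩
      set n₀ := Nat.find hex with hn₀
      have hspec := Nat.find_spec hex
      by_cases h1 : n₀ = 1
      · refine ⟨Ball E x, Or.inr (mem_insert _ _), ?_⟩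
        have hw := hspec.2
        rw [← hn₀, h1] at hw
        exact hw
      · have h2 : 2 ≤ n₀ := by have := hspec.1; omega
        have hmin : w ∉ ccfB E x (n₀ - 1) := fun hc =>
          Nat.find_min hex (by omega : n₀ - 1 < n₀) ⟨by omega, hc⟩
        have key2 : w ∈ ccfB E x ((n₀ - 2) + 2) := by
          have h' : n₀ - 2 + 2 = n₀ := by omega
          rw [h']; exact hspec.2
        have key1 : w ∉ ccfB E x ((n₀ - 2) + 1) := by
          have h' : n₀ - 2 + 1 = n₀ - 1 := by omega
          rw [h']; exact hmin
        rcases lt_trichotomy x w with hlt | heq | hgt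
        · have hP : w ∈ ccfPiece E x true (n₀ - 2) := ⟨key2, key1, by simp [hlt]⟩
          by_cases hpar : (n₀ - 2) % 2 = 0
          · exact ⟨_, Or.inl ⟨n₀ - 2, hpar, Or.inl rfl⟩, hP⟩
          · exact ⟨_, Or.inr (mem_insert_of_mem _ ⟨n₀ - 2, by omega, Or.inl rfl⟩), hP⟩
        · exact ⟨Ball E x, Or.inr (mem_insert _ _), heq ▸ hdiag x⟩
        · have hP : w ∈ ccfPiece E x false (n₀ - 2) := ⟨key2, key1, by simp [hgt]⟩
          by_cases hpar : (n₀ - 2) % 2 = 0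
          · exact ⟨_, Or.inl ⟨n₀ - 2, hpar, Or.inr rfl⟩, hP⟩
          · exact ⟨_, Or.inr (mem_insert_of_mem _ ⟨n₀ - 2, by omega, Or.inr rfl⟩), hP⟩
  · rintro A hA
    rcases hA with ⟨n, -, hA'⟩ | hA'
    · rcases hA' with rfl | rfl <;> exact ccf_piece_bounded hdiag hsymm hconv _ _
    · rcases hA' with rfl | ⟨n, -, hA''⟩
      · exact ⟨x, fun w hw => ⟨x, hdiag x, hw⟩⟩
      · rcases hA'' with rfl | rfl <;> exact ccf_piece_bounded hdiag hsymm hconv _ _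
  · rintro A ⟨n, hn, hA⟩ B ⟨m, hm, hB⟩ hne
    rcases hA with rfl | rfl <;> rcases hB with rfl | rfl
    · exact ccf_sep_pieces hdiag hsymm hconv (by omega)
        (Or.inr fun h => hne (by rw [h]))
    · exact ccf_sep_pieces hdiag hsymm hconv (by omega) (Or.inl (by simp))
    · exact ccf_sep_pieces hdiag hsymm hconv (by omega) (Or.inl (by simp))
    · exact ccf_sep_pieces hdiag hsymm hconv (by omega)
        (Or.inr fun h => hne (by rw [h]))
  · rintro A hA B hB hne
    rcases hA with rfl | ⟨n, hn, hA'⟩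
    · rcases hB with rfl | ⟨m, hm, hB'⟩
      · exact absurd rfl hne
      · rcases hB' with rfl | rfl <;>
          exact ccf_sep_ball_piece hdiag (by omega)
    · rcases hB with rfl | ⟨m, hm, hB'⟩
      · rcases hA' with rfl | rfl <;>
          exact ccf_sep_piece_ball hdiag hsymm (by omega)
      · rcases hA' with rfl | rfl <;> rcases hB' with rfl | rfl
        · exact ccf_sep_pieces hdiag hsymm hconv (by omega)
            (Or.inr fun h => hne (by rw [h]))
        · exact ccf_sep_pieces hdiag hsymm hconv (by omega) (Or.inl (by simp))
        · exact ccf_sep_pieces hdiag hsymm hconv (by omega) (Or.inl (by simp))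
        · exact ccf_sep_pieces hdiag hsymm hconv (by omega)
            (Or.inr fun h => hne (by rw [h]))
end
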